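/- arXiv:2503.11166 — 8 statements merged into one kernel-verified Lean document; each statement's English description precedes it below -/
import Mathlib

section
/- For every u in H^2(0,T) with u(0)=0 and every constant κ>0, choosing w with ∂_t w(t) = e^{-κt} ∂_t u(t), w(0)=0, the bilinear form a_μ(u,w) := ∫_0^T ∂_t^2 u ∂_t w dt + ∂_t u(0) ∂_t w(0) + μ ∫_0^T u ∂_t w dt satisfies a_μ(u,w) ≥ (κ/(2 e^{κT})) (‖∂_t u‖²_{L²(0,T)} + μ ‖u‖²_{L²(0,T)}). -/
open Real Set

/-! Both integrals in `a_μ(u, w)` have the form `∫ f' e^{-κt} f` (with `f = u'` and `f = u`),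
and `f' e^{-κt} f = (e^{-κt} f² / 2)' + (κ/2) e^{-κt} f²`. After integrating, the boundary terms
at `T` are nonnegative, the one at `0` is cancelled by `u'(0) w'(0) = u'(0)²` for `f = u'` and
vanishes for `f = u` because `u(0) = 0`; what remains is `(κ/2) ∫ e^{-κt} (u'² + μ u²)`, and
`e^{-κt} ≥ e^{-κT}` on `[0, T]`. -/

theorem hasDerivAt_exp_neg_mul_sq_div_two {κ t f' : ℝ} {f : ℝ → ℝ} (hf : HasDerivAt f f' t) :
    HasDerivAt (fun t => exp (-(κ * t)) * f t ^ 2 / 2)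
      (f' * (exp (-(κ * t)) * f t) - κ / 2 * (exp (-(κ * t)) * f t ^ 2)) t := by
  have hexp : HasDerivAt (fun t => exp (-(κ * t))) (-κ * exp (-(κ * t))) t := by
    simpa [mul_comm] using ((hasDerivAt_id t).const_mul κ).neg.exp
  exact ((hexp.fun_mul (hf.fun_pow 2)).div_const 2).congr_deriv (by push_cast; ring)

theorem integral_deriv_mul_exp_neg_mul {a b κ : ℝ} {f f' : ℝ → ℝ}
    (hf : ∀ t ∈ uIcc a b, HasDerivAt f (f' t) t) (hf' : ContinuousOn f' (uIcc a b)) :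
    ∫ t in a..b, f' t * (exp (-(κ * t)) * f t) =
      exp (-(κ * b)) * f b ^ 2 / 2 - exp (-(κ * a)) * f a ^ 2 / 2
        + κ / 2 * ∫ t in a..b, exp (-(κ * t)) * f t ^ 2 := by
  have hfc : ContinuousOn f (uIcc a b) := fun t ht => (hf t ht).continuousAt.continuousWithinAt
  have hexp : ContinuousOn (fun t => exp (-(κ * t))) (uIcc a b) := by fun_prop
  have hi₁ : IntervalIntegrable (fun t => f' t * (exp (-(κ * t)) * f t))
      MeasureTheory.volume a b :=
    (hf'.mul (hexp.mul hfc)).intervalIntegrable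
  have hi₂ : IntervalIntegrable (fun t => κ / 2 * (exp (-(κ * t)) * f t ^ 2))
      MeasureTheory.volume a b :=
    (continuousOn_const.mul (hexp.mul (hfc.pow 2))).intervalIntegrable
  have hftc := intervalIntegral.integral_eq_sub_of_hasDerivAt
    (fun t ht => hasDerivAt_exp_neg_mul_sq_div_two (hf t ht)) (hi₁.sub hi₂)
  rw [intervalIntegral.integral_sub hi₁ hi₂, intervalIntegral.integral_const_mul] at hftc
  linarith

theorem exp_neg_mul_mul_integral_le {a b κ : ℝ} (hab : a ≤ b) (hκ : 0 ≤ κ)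
    {g : ℝ → ℝ} (hg : ContinuousOn g (Icc a b)) (hg₀ : ∀ t ∈ Icc a b, 0 ≤ g t) :
    exp (-(κ * b)) * ∫ t in a..b, g t ≤ ∫ t in a..b, exp (-(κ * t)) * g t := by
  rw [← intervalIntegral.integral_const_mul]
  refine intervalIntegral.integral_mono_on hab ?_ ?_ fun t ht => ?_
  · exact (continuousOn_const.mul (uIcc_of_le hab ▸ hg)).intervalIntegrable
  · exact ((by fun_prop : Continuous fun t => exp (-(κ * t))).continuousOn.mul
      (uIcc_of_le hab ▸ hg)).intervalIntegrable
  · have : exp (-(κ * b)) ≤ exp (-(κ * t)) := exp_le_exp.2 (by nlinarith [ht.2])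
    exact mul_le_mul_of_nonneg_right this (hg₀ t ht)

theorem stmt_0_general (T μ κ : ℝ) (hT : 0 < T) (hμ : 0 < μ) (hκ : 0 < κ)
    (u u' u'' : ℝ → ℝ)
    (hu : ∀ t ∈ Icc (0:ℝ) T, HasDerivAt u (u' t) t)
    (hu' : ∀ t ∈ Icc (0:ℝ) T, HasDerivAt u' (u'' t) t)
    (hu''c : ContinuousOn u'' (Icc (0:ℝ) T))
    (hu0 : u 0 = 0)
    (w' : ℝ → ℝ)
    (hw' : ∀ t, w' t = Real.exp (-(κ * t)) * u' t) :
    (∫ t in (0:ℝ)..T, u'' t * w' t) + u' 0 * w' 0 +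
        μ * ∫ t in (0:ℝ)..T, u t * w' t
      ≥ κ / (2 * Real.exp (κ * T)) *
        ((∫ t in (0:ℝ)..T, (u' t)^2) + μ * ∫ t in (0:ℝ)..T, (u t)^2) := by
  rw [← uIcc_of_le hT.le] at hu hu' hu''c
  have hcu : ContinuousOn u (uIcc 0 T) := fun t ht => (hu t ht).continuousAt.continuousWithinAt
  have hcu' : ContinuousOn u' (uIcc 0 T) := fun t ht => (hu' t ht).continuousAt.continuousWithinAt
  have ibp₁ : ∫ t in (0:ℝ)..T, u'' t * w' t = exp (-(κ * T)) * u' T ^ 2 / 2 - u' 0 ^ 2 / 2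
      + κ / 2 * ∫ t in (0:ℝ)..T, exp (-(κ * t)) * u' t ^ 2 := by
    simpa only [hw', mul_zero, neg_zero, exp_zero, one_mul]
      using integral_deriv_mul_exp_neg_mul hu' hu''c
  have ibp₂ : ∫ t in (0:ℝ)..T, u t * w' t = exp (-(κ * T)) * u T ^ 2 / 2
      + κ / 2 * ∫ t in (0:ℝ)..T, exp (-(κ * t)) * u t ^ 2 := by
    have hw'u : (fun t => u t * w' t) = fun t => u' t * (exp (-(κ * t)) * u t) :=
      funext fun t => by rw [hw']; ring
    rw [hw'u, integral_deriv_mul_exp_neg_mul hu hcu', hu0]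
    ring
  rw [uIcc_of_le hT.le] at hcu hcu'
  have hb₁ := exp_neg_mul_mul_integral_le (g := fun t => u' t ^ 2) hT.le hκ.le (hcu'.pow 2)
    fun t _ => sq_nonneg (u' t)
  have hb₂ := exp_neg_mul_mul_integral_le (g := fun t => u t ^ 2) hT.le hκ.le (hcu.pow 2)
    fun t _ => sq_nonneg (u t)
  have hw'0 : w' 0 = u' 0 := by simp [hw']
  have hscale : κ / (2 * exp (κ * T)) = κ / 2 * exp (-(κ * T)) := by
    rw [exp_neg]; field_simp
  rw [ibp₁, ibp₂, hw'0, hscale]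
  have he := (exp_pos (-(κ * T))).le
  linarith [mul_le_mul_of_nonneg_left hb₁ (by positivity : 0 ≤ κ / 2),
    mul_le_mul_of_nonneg_left hb₂ (by positivity : 0 ≤ μ * (κ / 2)),
    sq_nonneg (u' 0), mul_nonneg he (sq_nonneg (u' T)),
    mul_nonneg hμ.le (mul_nonneg he (sq_nonneg (u T)))]

/-- Coercivity of the bilinear form `a_μ` with exponential-weight test function:
for `u ∈ H²(0,T)` with `u(0)=0` and `w` with `w' t = e^{-κ t} u' t`, `w(0)=0`,
`a_μ(u,w) ≥ (κ/(2 e^{κT})) (‖u'‖² + μ ‖u‖²)`. -/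
theorem stmt_0 (T μ κ : ℝ) (hT : 0 < T) (hμ : 0 < μ) (hκ : 0 < κ)
    (u u' u'' : ℝ → ℝ)
    (hu : ∀ t ∈ Icc (0:ℝ) T, HasDerivAt u (u' t) t)
    (hu' : ∀ t ∈ Icc (0:ℝ) T, HasDerivAt u' (u'' t) t)
    (hu''c : ContinuousOn u'' (Icc (0:ℝ) T))
    (hu0 : u 0 = 0)
    (w w' : ℝ → ℝ)
    (hw : ∀ t ∈ Icc (0:ℝ) T, HasDerivAt w (w' t) t)
    (hw' : ∀ t, w' t = Real.exp (-(κ * t)) * u' t)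
    (hw0 : w 0 = 0) :
    (∫ t in (0:ℝ)..T, u'' t * w' t) + u' 0 * w' 0 +
        μ * ∫ t in (0:ℝ)..T, u t * w' t
      ≥ κ / (2 * Real.exp (κ * T)) *
        ((∫ t in (0:ℝ)..T, (u' t)^2) + μ * ∫ t in (0:ℝ)..T, (u t)^2) :=
  stmt_0_general T μ κ hT hμ hκ u u' u'' hu hu' hu''c hu0 w' hw'
end

section
/- For every u ∈ H^2(0,T) with u(0)=0, the bilinear form a_μ satisfies a_μ(u, L_T u) ≥ (1/(2eT)) (‖∂_t u‖²_{L²(0,T)} + μ ‖u‖²_{L²(0,T)}), where L_T u(t) = ∫_0^t e^{-s/T} ∂_s u(s) ds. -/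
open Real Set

/-! Multiplying `g'` by the test function `e^{-t/T} g` and integrating by parts gives
`∫ g' e^{-t/T} g = (1/(2T)) ∫ e^{-t/T} g² + (e^{-1} g(T)² - g(0)²)/2`, the derivative of the weight
producing the positive `1/(2T)` term. Applied to `g = u'` the term `-u'(0)²/2` is absorbed by the
boundary term `u'(0)²` of `a_μ`, applied to `g = u` it vanishes since `u(0) = 0`, and finally
`e^{-t/T} ≥ e^{-1}` on `[0, T]`. -/

open intervalIntegral in
theorem integral_deriv_mul_exp_mul_eq {T : ℝ} (hT : 0 < T) {g g' : ℝ → ℝ}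
    (hg : ∀ t ∈ Icc 0 T, HasDerivAt g (g' t) t) (hg' : ContinuousOn g' (Icc 0 T)) :
    ∫ t in (0:ℝ)..T, g' t * (exp (-(t / T)) * g t) =
      1 / (2 * T) * (∫ t in (0:ℝ)..T, exp (-(t / T)) * g t ^ 2) +
        (exp (-1) * g T ^ 2 - g 0 ^ 2) / 2 := by
  rw [← uIcc_of_le hT.le] at hg hg'
  have hw : Continuous fun t : ℝ => exp (-(t / T)) := by fun_prop
  have hcg : ContinuousOn (fun t => exp (-(t / T)) * g t ^ 2) (uIcc 0 T) :=
    hw.continuousOn.mul ((HasDerivAt.continuousOn hg).pow 2)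
  have hcg' : ContinuousOn (fun t => g' t * (exp (-(t / T)) * g t)) (uIcc 0 T) :=
    hg'.mul (hw.continuousOn.mul (HasDerivAt.continuousOn hg))
  have hprim : ∀ t ∈ uIcc 0 T, HasDerivAt (fun s => exp (-(s / T)) * g s ^ 2 / 2)
      (g' t * (exp (-(t / T)) * g t) - 1 / (2 * T) * (exp (-(t / T)) * g t ^ 2)) t := by
    intro t ht
    have hexp : HasDerivAt (fun s => exp (-(s / T))) (exp (-(t / T)) * (-(1 / T))) t := by
      simpa using ((hasDerivAt_id t).div_const T).neg.exp
    refine ((hexp.mul ((hg t ht).fun_pow 2)).div_const 2).congr_deriv ?_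
    field_simp
    ring
  have hftc := integral_eq_sub_of_hasDerivAt hprim
    ((hcg'.sub (continuousOn_const.mul hcg)).intervalIntegrable)
  rw [integral_sub hcg'.intervalIntegrable (hcg.intervalIntegrable.const_mul _),
    integral_const_mul, div_self hT.ne'] at hftc
  simp only [zero_div, neg_zero, exp_zero, one_mul] at hftc
  linarith

theorem exp_neg_one_mul_integral_le {T : ℝ} (hT : 0 ≤ T) {f : ℝ → ℝ}
    (hf : ContinuousOn f (Icc 0 T)) (hf0 : ∀ t ∈ Icc 0 T, 0 ≤ f t) :
    exp (-1) * ∫ t in (0:ℝ)..T, f t ≤ ∫ t in (0:ℝ)..T, exp (-(t / T)) * f t := by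
  rw [← uIcc_of_le hT] at hf
  rw [← intervalIntegral.integral_const_mul]
  refine intervalIntegral.integral_mono_on hT (hf.intervalIntegrable.const_mul _)
    ((continuous_exp.comp_continuousOn (by fun_prop)).mul hf).intervalIntegrable fun t ht => ?_
  have htT : t / T ≤ 1 := div_le_one_of_le₀ ht.2 hT
  exact mul_le_mul_of_nonneg_right (exp_le_exp.2 (by linarith)) (hf0 t ht)

/-- Coercivity of `a_μ(·, L_T ·)`: for `u ∈ H²(0,T)` with `u(0)=0`,
`a_μ(u, L_T u) ≥ (1/(2eT)) (‖u'‖² + μ ‖u‖²)`, where `∂_t L_T u(t) = e^{-t/T} u'(t)`. -/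
theorem stmt_1 (T μ : ℝ) (hT : 0 < T) (hμ : 0 < μ)
    (u u' u'' : ℝ → ℝ)
    (hu : ∀ t ∈ Icc (0:ℝ) T, HasDerivAt u (u' t) t)
    (hu' : ∀ t ∈ Icc (0:ℝ) T, HasDerivAt u' (u'' t) t)
    (hu''c : ContinuousOn u'' (Icc (0:ℝ) T))
    (hu0 : u 0 = 0) :
    (∫ t in (0:ℝ)..T, u'' t * (Real.exp (-(t/T)) * u' t)) +
        u' 0 * (Real.exp (-((0:ℝ)/T)) * u' 0) +
        μ * ∫ t in (0:ℝ)..T, u t * (Real.exp (-(t/T)) * u' t)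
      ≥ 1 / (2 * Real.exp 1 * T) *
        ((∫ t in (0:ℝ)..T, (u' t)^2) + μ * ∫ t in (0:ℝ)..T, (u t)^2) := by
  have hcu := HasDerivAt.continuousOn hu
  have hcu' := HasDerivAt.continuousOn hu'
  have hI₁ := integral_deriv_mul_exp_mul_eq hT hu' hu''c
  have hI₂ : ∫ t in (0:ℝ)..T, u t * (exp (-(t / T)) * u' t) =
      ∫ t in (0:ℝ)..T, u' t * (exp (-(t / T)) * u t) :=
    intervalIntegral.integral_congr fun t _ => by ring
  rw [hI₂, integral_deriv_mul_exp_mul_eq hT hu hcu', hI₁, hu0]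
  have hA := exp_neg_one_mul_integral_le hT.le (hcu'.fun_pow 2) fun t _ => sq_nonneg (u' t)
  have hB := exp_neg_one_mul_integral_le hT.le (hcu.fun_pow 2) fun t _ => sq_nonneg (u t)
  have hweighted : 1 / (2 * exp 1 * T) *
      ((∫ t in (0:ℝ)..T, u' t ^ 2) + μ * ∫ t in (0:ℝ)..T, u t ^ 2) ≤
      1 / (2 * T) * ((∫ t in (0:ℝ)..T, exp (-(t / T)) * u' t ^ 2) +
        μ * ∫ t in (0:ℝ)..T, exp (-(t / T)) * u t ^ 2) := by
    rw [show 1 / (2 * exp 1 * T) = 1 / (2 * T) * exp (-1) by rw [exp_neg]; field_simp, mul_assoc]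
    gcongr
    linear_combination hA + μ * hB
  simp only [zero_div, neg_zero, exp_zero, one_mul, ge_iff_le]
  nlinarith [mul_nonneg hμ.le (mul_nonneg (exp_pos (-1)).le (sq_nonneg (u T))),
    mul_nonneg (exp_pos (-1)).le (sq_nonneg (u' T)), sq_nonneg (u' 0)]
end

section
/- For every u ∈ H²(0,T), the identity (∂_t² u, ∂_t L_T u)_{L²(0,T)} + |∂_t u(0)|² = (1/(2T)) (∂_t u, ∂_t L_T u)_{L²(0,T)} + (1/(2e)) |∂_t u(T)|² + (1/2) |∂_t u(0)|² holds, where ∂_t L_T u(t) = e^{-t/T} ∂_t u(t). -/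
open Real Set

/-! The weighted energy `w f² / 2` has derivative `f' (w f) + w' f² / 2`, so integrating it over
`[0, T]` with `f = u'` and `w t = exp (-t/T)`, `w' = -w / T`, gives the identity; the boundary
values are `e⁻¹ u'(T)² / 2` and `u'(0)² / 2`. -/

theorem integral_deriv_mul_weight_mul {a b : ℝ} {f f' w w' : ℝ → ℝ}
    (hf : ∀ t ∈ uIcc a b, HasDerivAt f (f' t) t) (hw : ∀ t ∈ uIcc a b, HasDerivAt w (w' t) t)
    (hf'c : ContinuousOn f' (uIcc a b)) (hw'c : ContinuousOn w' (uIcc a b)) :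
    ∫ t in a..b, f' t * (w t * f t)
      = (w b * f b ^ 2 - w a * f a ^ 2) / 2 - (∫ t in a..b, w' t * f t ^ 2) / 2 := by
  have hfc : ContinuousOn f (uIcc a b) := fun t ht => (hf t ht).continuousAt.continuousWithinAt
  have hwc : ContinuousOn w (uIcc a b) := fun t ht => (hw t ht).continuousAt.continuousWithinAt
  have hint₁ : IntervalIntegrable (fun t => f' t * (w t * f t)) MeasureTheory.volume a b :=
    (hf'c.mul (hwc.mul hfc)).intervalIntegrable
  have hint₂ : IntervalIntegrable (fun t => w' t * f t ^ 2 / 2) MeasureTheory.volume a b :=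
    ((hw'c.mul (hfc.pow 2)).div_const 2).intervalIntegrable
  have hderiv : ∀ t ∈ uIcc a b, HasDerivAt (fun t => w t * f t ^ 2 / 2)
      (f' t * (w t * f t) + w' t * f t ^ 2 / 2) t := fun t ht => by
    refine (((hw t ht).mul ((hf t ht).pow 2)).div_const 2).congr_deriv ?_
    rw [Pi.pow_apply]
    ring
  have hftc := intervalIntegral.integral_eq_sub_of_hasDerivAt hderiv (hint₁.add hint₂)
  rw [intervalIntegral.integral_add hint₁ hint₂, intervalIntegral.integral_div] at hftc
  linarith

theorem hasDerivAt_exp_neg_div (T t : ℝ) :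
    HasDerivAt (fun s => exp (-(s / T))) (-exp (-(t / T)) / T) t := by
  have hexponent : HasDerivAt (fun s => -(s / T)) (-(1 / T)) t :=
    ((hasDerivAt_id' t).div_const T).neg
  convert hexponent.exp using 1
  ring

theorem stmt_2_general (T : ℝ) (hT : 0 < T)
    (u' u'' : ℝ → ℝ)
    (hu' : ∀ t ∈ Icc (0:ℝ) T, HasDerivAt u' (u'' t) t)
    (hu''c : ContinuousOn u'' (Icc (0:ℝ) T)) :
    (∫ t in (0:ℝ)..T, u'' t * (Real.exp (-(t/T)) * u' t)) + (u' 0)^2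
      = 1 / (2 * T) * (∫ t in (0:ℝ)..T, u' t * (Real.exp (-(t/T)) * u' t)) +
        1 / (2 * Real.exp 1) * (u' T)^2 + 1 / 2 * (u' 0)^2 := by
  rw [← uIcc_of_le hT.le] at hu' hu''c
  have henergy := integral_deriv_mul_weight_mul hu' (fun t _ => hasDerivAt_exp_neg_div T t) hu''c
    ((continuous_exp.comp ((continuous_id.div_const T).neg)).neg.div_const T).continuousOn
  have hweight : ∫ t in (0:ℝ)..T, -exp (-(t / T)) / T * u' t ^ 2
      = -(1 / T) * ∫ t in (0:ℝ)..T, u' t * (exp (-(t / T)) * u' t) := by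
    rw [← intervalIntegral.integral_const_mul]
    congr 1 with t
    ring
  rw [henergy, hweight, div_self hT.ne', zero_div, neg_zero, exp_zero, exp_neg]
  field_simp
  ring

/-- For every `u ∈ H²(0,T)`:
`(u'', ∂_t L_T u)_{L²} + |u'(0)|² = (1/(2T)) (u', ∂_t L_T u)_{L²} + (1/(2e)) |u'(T)|² + (1/2)|u'(0)|²`,
where `∂_t L_T u(t) = e^{-t/T} u'(t)`. -/
theorem stmt_2 (T : ℝ) (hT : 0 < T)
    (u u' u'' : ℝ → ℝ)
    (hu : ∀ t ∈ Icc (0:ℝ) T, HasDerivAt u (u' t) t)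
    (hu' : ∀ t ∈ Icc (0:ℝ) T, HasDerivAt u' (u'' t) t)
    (hu''c : ContinuousOn u'' (Icc (0:ℝ) T)) :
    (∫ t in (0:ℝ)..T, u'' t * (Real.exp (-(t/T)) * u' t)) + (u' 0)^2
      = 1 / (2 * T) * (∫ t in (0:ℝ)..T, u' t * (Real.exp (-(t/T)) * u' t)) +
        1 / (2 * Real.exp 1) * (u' T)^2 + 1 / 2 * (u' 0)^2 :=
  stmt_2_general T hT u' u'' hu' hu''c
end

section
/- For all u, w ∈ H^2_{0,•}(0,T), the continuity bound a_μ(u, L_T w) ≤ (1 + μ·2T²/π) ‖u‖_{H²_{0,•}(0,T)} ‖∂_t w‖_{L²(0,T)} + |∂_t u(0)| |∂_t w(0)| holds, where ‖u‖_{H²_{0,•}(0,T)} := ‖∂_t² u‖_{L²(0,T)} + T^{-1} ‖∂_t u‖_{L²(0,T)}. -/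
/-!
The weight `e^{-t/T}` lies in `(0, 1]` on `[0, T]`, so the `u''`-term of `a_μ(u, L_T w)` is bounded
by Cauchy–Schwarz, and so is the `μ`-term once `‖u‖` is traded for `(2T/π) ‖u'‖`.
That sharp Poincaré inequality comes from the Picone-type identity, with `k = π / (2T)`,
`u'² - k² u² - (k u² cot (k t))' = (u' - k u cot (k t))² ≥ 0`:
integrating it over `[0, T]`, the boundary term vanishes at `T` since `cot (π / 2) = 0`
and at `0` since `sin (k t) ≥ t / T` gives `u² cot (k t) = O(u² / t)`, and `u(0) = 0`.
-/

open Real Set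

open MeasureTheory Filter Topology

theorem Real.hasDerivAt_cot {x : ℝ} (hx : sin x ≠ 0) : HasDerivAt cot (-(1 + cot x ^ 2)) x := by
  rw [show cot = fun x => cos x / sin x from funext cot_eq_cos_div_sin]
  refine ((hasDerivAt_cos x).div (hasDerivAt_sin x) hx).congr_deriv ?_
  field_simp
  ring

theorem div_le_sin_pi_div_two_mul {T t : ℝ} (hT : 0 < T) (ht : t ∈ Icc 0 T) :
    t / T ≤ sin (π / (2 * T) * t) := by
  have hx : π / (2 * T) * t ≤ π / 2 := by
    rw [div_mul_eq_mul_div, div_le_div_iff₀ (by positivity) two_pos]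
    nlinarith [pi_pos, ht.2]
  convert mul_le_sin (by have := ht.1; positivity) hx using 1
  field_simp

section Poincare

variable {T : ℝ} {u u' : ℝ → ℝ}

theorem tendsto_sq_mul_cot_nhdsWithin_zero (hT : 0 < T) (hu : HasDerivAt u (u' 0) 0)
    (hu0 : u 0 = 0) :
    Tendsto (fun t => u t ^ 2 * cot (π / (2 * T) * t)) (𝓝[Ioc 0 T] 0) (𝓝 0) := by
  have hslope : Tendsto (fun t => u t ^ 2 / t) (𝓝[≠] 0) (𝓝 0) := by
    have := hasDerivAt_iff_tendsto_slope.1 (by simpa [hu0] using hu.pow 2)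
    refine this.congr fun t => ?_
    simp [slope_def_field, hu0]
  have hbound : ∀ t ∈ Ioc 0 T, ‖u t ^ 2 * cot (π / (2 * T) * t)‖ ≤ T * (u t ^ 2 / t) := by
    intro t ht
    have hsin := div_le_sin_pi_div_two_mul hT (Ioc_subset_Icc_self ht)
    have ht0 : 0 < t / T := div_pos ht.1 hT
    rw [norm_mul, norm_pow, Real.norm_eq_abs, sq_abs, cot_eq_cos_div_sin, norm_div,
      Real.norm_eq_abs, Real.norm_eq_abs, abs_of_pos (ht0.trans_le hsin)]
    calc u t ^ 2 * (|cos (π / (2 * T) * t)| / sin (π / (2 * T) * t))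
        ≤ u t ^ 2 * (1 / (t / T)) := by
          gcongr
          exact abs_cos_le_one _
      _ = T * (u t ^ 2 / t) := by field_simp
  refine squeeze_zero_norm' (eventually_nhdsWithin_of_forall hbound) ?_
  simpa using (hslope.mono_left (nhdsWithin_mono _ fun t ht => ht.1.ne')).const_mul T

theorem integral_sq_le_of_hasDerivAt (hT : 0 < T)
    (hu : ∀ t ∈ Icc 0 T, HasDerivAt u (u' t) t) (hu'c : ContinuousOn u' (Icc 0 T))
    (hu0 : u 0 = 0) :
    ∫ t in (0:ℝ)..T, u t ^ 2 ≤ (2 * T / π) ^ 2 * ∫ t in (0:ℝ)..T, u' t ^ 2 := by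
  set k := π / (2 * T) with hk
  set G := fun t => k * (u t ^ 2 * cot (k * t))
  have hsin : ∀ t ∈ Ioc 0 T, sin (k * t) ≠ 0 := fun t ht =>
    ((div_pos ht.1 hT).trans_le (div_le_sin_pi_div_two_mul hT (Ioc_subset_Icc_self ht))).ne'
  have hG' : ∀ t ∈ Ioc 0 T, HasDerivAt G
      (k * (2 * u t * u' t * cot (k * t)) - k ^ 2 * u t ^ 2 * (1 + cot (k * t) ^ 2)) t := by
    intro t ht
    have hcot := (hasDerivAt_cot (hsin t ht)).comp t ((hasDerivAt_id t).const_mul k)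
    refine (((hu t (Ioc_subset_Icc_self ht)).pow 2).mul hcot).const_mul k |>.congr_deriv ?_
    simp only [Function.comp_def, Pi.pow_apply]
    ring
  have hGcont : ContinuousOn G (Icc 0 T) := by
    intro t ht
    rcases ht.1.eq_or_lt with rfl | ht0
    · rw [← continuousWithinAt_sdiff_self, Icc_sdiff_left, ContinuousWithinAt]
      simpa [G, hu0] using
        (tendsto_sq_mul_cot_nhdsWithin_zero hT (hu 0 ⟨le_rfl, hT.le⟩) hu0).const_mul k
    · exact (hG' t ⟨ht0, ht.2⟩).continuousAt.continuousWithinAt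
  have hucont : ContinuousOn u (Icc 0 T) := fun t ht => (hu t ht).continuousAt.continuousWithinAt
  have hpicone := intervalIntegral.sub_le_integral_of_hasDeriv_right_of_le
    (φ := fun t => u' t ^ 2 - k ^ 2 * u t ^ 2) hT.le hGcont
    (fun t ht => (hG' t (Ioo_subset_Ioc_self ht)).hasDerivWithinAt)
    ((hu'c.pow 2).sub (continuousOn_const.mul (hucont.pow 2))).integrableOn_Icc
    (fun t _ => by nlinarith [sq_nonneg (u' t - k * u t * cot (k * t))])
  have hGT : G T = 0 := by
    simp [G, hk, cot_eq_cos_div_sin, show π / (2 * T) * T = π / 2 by field_simp]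
  have hG0 : G 0 = 0 := by simp [G, hu0]
  have hu'2 : IntervalIntegrable (fun t => u' t ^ 2) volume 0 T :=
    (hu'c.pow 2).intervalIntegrable_of_Icc hT.le
  have hu2 : IntervalIntegrable (fun t => u t ^ 2) volume 0 T :=
    (hucont.pow 2).intervalIntegrable_of_Icc hT.le
  rw [hGT, hG0, sub_zero, intervalIntegral.integral_sub hu'2 (hu2.const_mul _),
    intervalIntegral.integral_const_mul] at hpicone
  have hk2 : (2 * T / π) ^ 2 * k ^ 2 = 1 := by rw [hk]; field_simp
  calc ∫ t in (0:ℝ)..T, u t ^ 2 = (2 * T / π) ^ 2 * (k ^ 2 * ∫ t in (0:ℝ)..T, u t ^ 2) := by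
        rw [← mul_assoc, hk2, one_mul]
    _ ≤ (2 * T / π) ^ 2 * ∫ t in (0:ℝ)..T, u' t ^ 2 := by gcongr; linarith

theorem sqrt_integral_sq_le_of_hasDerivAt (hT : 0 < T)
    (hu : ∀ t ∈ Icc 0 T, HasDerivAt u (u' t) t) (hu'c : ContinuousOn u' (Icc 0 T))
    (hu0 : u 0 = 0) :
    √(∫ t in (0:ℝ)..T, u t ^ 2) ≤ 2 * T / π * √(∫ t in (0:ℝ)..T, u' t ^ 2) := by
  calc √(∫ t in (0:ℝ)..T, u t ^ 2)
      ≤ √((2 * T / π) ^ 2 * ∫ t in (0:ℝ)..T, u' t ^ 2) :=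
        sqrt_le_sqrt (integral_sq_le_of_hasDerivAt hT hu hu'c hu0)
    _ = 2 * T / π * √(∫ t in (0:ℝ)..T, u' t ^ 2) := by
        rw [sqrt_mul (sq_nonneg _), sqrt_sq (by positivity)]

end Poincare

theorem integral_abs_mul_abs_le_sqrt_mul_sqrt {α : Type*} [MeasurableSpace α] {μ : Measure α}
    {f g : α → ℝ} (hf : MemLp f 2 μ) (hg : MemLp g 2 μ) :
    ∫ a, |f a| * |g a| ∂μ ≤ √(∫ a, f a ^ 2 ∂μ) * √(∫ a, g a ^ 2 ∂μ) := by
  have h2 : ENNReal.ofReal 2 = 2 := by norm_num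
  have holder := integral_mul_norm_le_Lp_mul_Lq Real.HolderConjugate.two_two
    (h2 ▸ hf) (h2 ▸ hg)
  simpa only [Real.norm_eq_abs, Real.rpow_two, sq_abs, ← Real.sqrt_eq_rpow] using holder

theorem intervalIntegral_mul_le_sqrt_mul_sqrt_of_abs_le_one {a b : ℝ} (hab : a ≤ b)
    {f g ρ : ℝ → ℝ} (hf : ContinuousOn f (Icc a b)) (hg : ContinuousOn g (Icc a b))
    (hρ : ContinuousOn ρ (Icc a b)) (hρ_le : ∀ t ∈ Icc a b, |ρ t| ≤ 1) :
    ∫ t in a..b, f t * (ρ t * g t) ≤ √(∫ t in a..b, f t ^ 2) * √(∫ t in a..b, g t ^ 2) := by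
  have hmemLp : ∀ {h : ℝ → ℝ}, ContinuousOn h (Icc a b) → MemLp h 2 (volume.restrict (Ioc a b)) :=
    fun hh => (memLp_two_iff_integrable_sq
      ((hh.mono Ioc_subset_Icc_self).aestronglyMeasurable measurableSet_Ioc)).2
      ((hh.pow 2).integrableOn_Icc.mono_set Ioc_subset_Icc_self)
  calc ∫ t in a..b, f t * (ρ t * g t) ≤ ∫ t in a..b, |f t| * |g t| := by
        refine intervalIntegral.integral_mono_on hab
          ((hf.mul (hρ.mul hg)).intervalIntegrable_of_Icc hab)
          ((hf.abs.mul hg.abs).intervalIntegrable_of_Icc hab) fun t ht => ?_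
        calc f t * (ρ t * g t) ≤ |f t| * (|ρ t| * |g t|) := by
              rw [← abs_mul, ← abs_mul]; exact le_abs_self _
          _ ≤ |f t| * (1 * |g t|) := by gcongr; exact hρ_le t ht
          _ = |f t| * |g t| := by rw [one_mul]
    _ ≤ _ := by
        simp only [intervalIntegral.integral_of_le hab]
        exact integral_abs_mul_abs_le_sqrt_mul_sqrt (hmemLp hf) (hmemLp hg)

theorem stmt_8_general (T μ : ℝ) (hT : 0 < T) (hμ : 0 < μ)
    (u u' u'' w' w'' : ℝ → ℝ)
    (hu : ∀ t ∈ Icc (0:ℝ) T, HasDerivAt u (u' t) t)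
    (hu' : ∀ t ∈ Icc (0:ℝ) T, HasDerivAt u' (u'' t) t)
    (hu''c : ContinuousOn u'' (Icc (0:ℝ) T))
    (hu0 : u 0 = 0)
    (hw' : ∀ t ∈ Icc (0:ℝ) T, HasDerivAt w' (w'' t) t) :
    (∫ t in (0:ℝ)..T, u'' t * (Real.exp (-(t/T)) * w' t)) +
        u' 0 * (Real.exp (-((0:ℝ)/T)) * w' 0) +
        μ * ∫ t in (0:ℝ)..T, u t * (Real.exp (-(t/T)) * w' t)
      ≤ (1 + μ * (2 * T^2 / Real.pi)) *
          (Real.sqrt (∫ t in (0:ℝ)..T, (u'' t)^2) +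
            T⁻¹ * Real.sqrt (∫ t in (0:ℝ)..T, (u' t)^2)) *
          Real.sqrt (∫ t in (0:ℝ)..T, (w' t)^2) +
        |u' 0| * |w' 0| := by
  have hucont : ContinuousOn u (Icc 0 T) := fun t ht => (hu t ht).continuousAt.continuousWithinAt
  have hu'c : ContinuousOn u' (Icc 0 T) := fun t ht => (hu' t ht).continuousAt.continuousWithinAt
  have hw'c : ContinuousOn w' (Icc 0 T) := fun t ht => (hw' t ht).continuousAt.continuousWithinAt
  have hexp : ContinuousOn (fun t => exp (-(t / T))) (Icc 0 T) := by fun_prop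
  have hexp_le : ∀ t ∈ Icc 0 T, |exp (-(t / T))| ≤ 1 := fun t ht => by
    rw [abs_of_pos (exp_pos _), exp_le_one_iff, neg_nonpos]
    exact div_nonneg ht.1 hT.le
  have hu''_term :=
    intervalIntegral_mul_le_sqrt_mul_sqrt_of_abs_le_one hT.le hu''c hw'c hexp hexp_le
  have hboundary : u' 0 * (exp (-(0 / T)) * w' 0) ≤ |u' 0| * |w' 0| := by
    simpa [abs_mul] using le_abs_self (u' 0 * w' 0)
  have hu_term :=
    (intervalIntegral_mul_le_sqrt_mul_sqrt_of_abs_le_one hT.le hucont hw'c hexp hexp_le).trans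
      (mul_le_mul_of_nonneg_right (sqrt_integral_sq_le_of_hasDerivAt hT hu hu'c hu0)
        (sqrt_nonneg _))
  set a := √(∫ t in (0:ℝ)..T, u'' t ^ 2)
  set b := √(∫ t in (0:ℝ)..T, u' t ^ 2)
  set c := √(∫ t in (0:ℝ)..T, w' t ^ 2)
  have hRHS : (1 + μ * (2 * T ^ 2 / π)) * (a + T⁻¹ * b) * c =
      a * c + μ * (2 * T / π * b * c) + (T⁻¹ * b * c + μ * (2 * T ^ 2 / π) * a * c) := by
    field_simp
    ring
  have hrest : 0 ≤ T⁻¹ * b * c + μ * (2 * T ^ 2 / π) * a * c := by positivity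
  rw [hRHS]
  linarith [mul_le_mul_of_nonneg_left hu_term hμ.le]

/-- Continuity bound for `a_μ(u, L_T w)`:
`a_μ(u, L_T w) ≤ (1 + μ 2T²/π) ‖u‖_{H²_{0,•}} ‖w'‖_{L²} + |u'(0)||w'(0)|`,
with `‖u‖_{H²_{0,•}} = ‖u''‖_{L²} + T⁻¹ ‖u'‖_{L²}` and `∂_t L_T w(t) = e^{-t/T} w'(t)`. -/
theorem stmt_8 (T μ : ℝ) (hT : 0 < T) (hμ : 0 < μ)
    (u u' u'' w w' w'' : ℝ → ℝ)
    (hu : ∀ t ∈ Icc (0:ℝ) T, HasDerivAt u (u' t) t)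
    (hu' : ∀ t ∈ Icc (0:ℝ) T, HasDerivAt u' (u'' t) t)
    (hu''c : ContinuousOn u'' (Icc (0:ℝ) T))
    (hu0 : u 0 = 0)
    (hw : ∀ t ∈ Icc (0:ℝ) T, HasDerivAt w (w' t) t)
    (hw' : ∀ t ∈ Icc (0:ℝ) T, HasDerivAt w' (w'' t) t)
    (hw''c : ContinuousOn w'' (Icc (0:ℝ) T))
    (hw0 : w 0 = 0) :
    (∫ t in (0:ℝ)..T, u'' t * (Real.exp (-(t/T)) * w' t)) +
        u' 0 * (Real.exp (-((0:ℝ)/T)) * w' 0) +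
        μ * ∫ t in (0:ℝ)..T, u t * (Real.exp (-(t/T)) * w' t)
      ≤ (1 + μ * (2 * T^2 / Real.pi)) *
          (Real.sqrt (∫ t in (0:ℝ)..T, (u'' t)^2) +
            T⁻¹ * Real.sqrt (∫ t in (0:ℝ)..T, (u' t)^2)) *
          Real.sqrt (∫ t in (0:ℝ)..T, (w' t)^2) +
        |u' 0| * |w' 0| :=
  stmt_8_general T μ hT hμ u u' u'' w' w'' hu hu' hu''c hu0 hw'
end

section
/- For every u ∈ H^2_{0,•}(0,T), the trace bound |∂_t u(0)| ≤ (2/3) T^{1/2} ‖∂_t² u‖_{L²(0,T)} + T^{-1/2} ‖∂_t u‖_{L²(0,T)} holds; consequently |∂_t u(0)| ≤ T^{1/2} ‖u‖_{H²_{0,•}(0,T)} with ‖u‖_{H²_{0,•}(0,T)} = ‖∂_t² u‖_{L²} + T^{-1} ‖∂_t u‖_{L²}. -/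
/-!
Integrating `(T - t) u''(t)` by parts gives `T u'(0) = ∫₀ᵀ u' - ∫₀ᵀ (T - t) u''(t) dt`.
Cauchy–Schwarz bounds the two integrals by `√T ‖u'‖` and `√(T³/3) ‖u''‖`, and `1/√3 ≤ 2/3`.
The second bound follows from the first since `2/3 ≤ 1` and `T^{-1/2} = √T T⁻¹`.
-/

open Real Set MeasureTheory

theorem abs_integral_mul_le_sqrt_mul_sqrt {α : Type*} [MeasurableSpace α] {μ : Measure α}
    {f g : α → ℝ} (hf : Integrable (fun x => f x ^ 2) μ) (hg : Integrable (fun x => g x ^ 2) μ)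
    (hfg : Integrable (fun x => f x * g x) μ) :
    |∫ x, f x * g x ∂μ| ≤ √(∫ x, f x ^ 2 ∂μ) * √(∫ x, g x ^ 2 ∂μ) := by
  set A := ∫ x, f x ^ 2 ∂μ
  set B := ∫ x, f x * g x ∂μ
  set C := ∫ x, g x ^ 2 ∂μ
  have hA : 0 ≤ A := integral_nonneg fun x => sq_nonneg _
  -- the quadratic `s ↦ ∫ (s f + g)²` is nonnegative, so its discriminant is not positive
  have hquad : ∀ s : ℝ, 0 ≤ A * (s * s) + 2 * B * s + C := by
    intro s
    have hexpand : (fun x => (s * f x + g x) ^ 2)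
        = fun x => s ^ 2 * f x ^ 2 + (2 * s * (f x * g x) + g x ^ 2) := by
      funext x; ring
    have hnonneg : 0 ≤ ∫ x, (s * f x + g x) ^ 2 ∂μ := integral_nonneg fun x => sq_nonneg _
    have hrest : Integrable (fun x => 2 * s * (f x * g x) + g x ^ 2) μ := (hfg.const_mul _).add hg
    rw [hexpand, integral_add (hf.const_mul _) hrest, integral_add (hfg.const_mul _) hg,
      integral_const_mul, integral_const_mul] at hnonneg
    linarith
  have hB : B ^ 2 ≤ A * C := by
    have := discrim_le_zero hquad
    rw [discrim] at this
    linarith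
  calc |B| = √(B ^ 2) := (sqrt_sq_eq_abs B).symm
    _ ≤ √(A * C) := sqrt_le_sqrt hB
    _ = √A * √C := sqrt_mul hA C

theorem intervalIntegral.abs_integral_mul_le_sqrt_mul_sqrt {a b : ℝ} (hab : a ≤ b) {f g : ℝ → ℝ}
    (hf : ContinuousOn f (Icc a b)) (hg : ContinuousOn g (Icc a b)) :
    |∫ x in a..b, f x * g x| ≤ √(∫ x in a..b, f x ^ 2) * √(∫ x in a..b, g x ^ 2) := by
  have hint : ∀ {h : ℝ → ℝ}, ContinuousOn h (Icc a b) → IntegrableOn h (Ioc a b) := fun hh =>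
    (hh.integrableOn_compact isCompact_Icc).mono_set Ioc_subset_Icc_self
  simp only [intervalIntegral.integral_of_le hab]
  exact _root_.abs_integral_mul_le_sqrt_mul_sqrt (hint (hf.pow 2)) (hint (hg.pow 2))
    (hint (hf.mul hg))

theorem integral_const_sub_sq {a b : ℝ} : ∫ x in a..b, (b - x) ^ 2 = (b - a) ^ 3 / 3 := by
  rw [intervalIntegral.integral_comp_sub_left (fun x => x ^ 2), integral_pow]
  norm_num

theorem integral_const_sub_mul_deriv {a b : ℝ} {f f' : ℝ → ℝ}
    (hf : ∀ x ∈ uIcc a b, HasDerivAt f (f' x) x) (hf' : IntervalIntegrable f' volume a b) :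
    ∫ x in a..b, (b - x) * f' x = (∫ x in a..b, f x) - (b - a) * f a := by
  have hlin : ∀ x, HasDerivAt (fun x => b - x) (-1) x := fun x => by
    simpa using (hasDerivAt_id x).const_sub b
  rw [intervalIntegral.integral_mul_deriv_eq_deriv_mul_of_hasDerivAt
    (fun x _ => (hlin x).continuousAt.continuousWithinAt)
    (fun x hx => (hf x hx).continuousAt.continuousWithinAt)
    (fun x _ => hlin x) (fun x hx => hf x (Ioo_subset_Icc_self hx)) intervalIntegrable_const hf']
  simp only [sub_self, zero_mul, zero_sub, neg_one_mul, intervalIntegral.integral_neg]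
  ring

theorem sub_mul_abs_le_of_hasDerivAt {a b : ℝ} (hab : a ≤ b) {f f' : ℝ → ℝ}
    (hf : ∀ x ∈ Icc a b, HasDerivAt f (f' x) x) (hf' : ContinuousOn f' (Icc a b)) :
    (b - a) * |f a| ≤
      √(b - a) * √(∫ x in a..b, f x ^ 2) + √((b - a) ^ 3 / 3) * √(∫ x in a..b, f' x ^ 2) := by
  have hf_cont : ContinuousOn f (Icc a b) := fun x hx =>
    (hf x hx).continuousAt.continuousWithinAt
  have hweight : ContinuousOn (fun x => b - x) (Icc a b) := by fun_prop
  have htaylor : (b - a) * f a = (∫ x in a..b, f x) - ∫ x in a..b, (b - x) * f' x := by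
    rw [integral_const_sub_mul_deriv (by rwa [uIcc_of_le hab])
      ((hf'.mono (uIcc_of_le hab).subset).intervalIntegrable)]
    ring
  have hmean : |∫ x in a..b, f x| ≤ √(b - a) * √(∫ x in a..b, f x ^ 2) := by
    simpa using intervalIntegral.abs_integral_mul_le_sqrt_mul_sqrt (f := fun _ => 1) hab
      continuousOn_const hf_cont
  have hweighted :
      |∫ x in a..b, (b - x) * f' x| ≤ √((b - a) ^ 3 / 3) * √(∫ x in a..b, f' x ^ 2) := by
    simpa [integral_const_sub_sq] using
      intervalIntegral.abs_integral_mul_le_sqrt_mul_sqrt hab hweight hf'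
  calc (b - a) * |f a| = |(b - a) * f a| := by rw [abs_mul, abs_of_nonneg (sub_nonneg.2 hab)]
    _ ≤ |∫ x in a..b, f x| + |∫ x in a..b, (b - x) * f' x| := htaylor ▸ abs_sub _ _
    _ ≤ _ := add_le_add hmean hweighted

theorem stmt_9_general (T : ℝ) (hT : 0 < T)
    (u' u'' : ℝ → ℝ)
    (hu' : ∀ t ∈ Icc (0:ℝ) T, HasDerivAt u' (u'' t) t)
    (hu''c : ContinuousOn u'' (Icc (0:ℝ) T)) :
    |u' 0| ≤ (2/3) * Real.sqrt T * Real.sqrt (∫ t in (0:ℝ)..T, (u'' t)^2) +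
        (Real.sqrt T)⁻¹ * Real.sqrt (∫ t in (0:ℝ)..T, (u' t)^2) ∧
      |u' 0| ≤ Real.sqrt T *
        (Real.sqrt (∫ t in (0:ℝ)..T, (u'' t)^2) +
          T⁻¹ * Real.sqrt (∫ t in (0:ℝ)..T, (u' t)^2)) := by
  set S₁ := √(∫ t in (0:ℝ)..T, u' t ^ 2)
  set S₂ := √(∫ t in (0:ℝ)..T, u'' t ^ 2)
  have hbound : T * |u' 0| ≤ √T * S₁ + √(T ^ 3 / 3) * S₂ := by
    simpa using sub_mul_abs_le_of_hasDerivAt hT.le hu' hu''c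
  have hconst : √(T ^ 3 / 3) ≤ 2 / 3 * T * √T := by
    rw [sqrt_le_iff]
    refine ⟨by positivity, ?_⟩
    rw [mul_pow, sq_sqrt hT.le]
    nlinarith [pow_pos hT 3]
  have hS₂ : 0 ≤ S₂ := sqrt_nonneg _
  have htrace : |u' 0| ≤ 2 / 3 * √T * S₂ + (√T)⁻¹ * S₁ := by
    refine le_of_mul_le_mul_left ?_ hT
    have hinv : T * (√T)⁻¹ = √T := by rw [← div_eq_mul_inv, div_sqrt]
    calc T * |u' 0| ≤ √T * S₁ + 2 / 3 * T * √T * S₂ := hbound.trans (by gcongr)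
      _ = T * (2 / 3 * √T * S₂ + (√T)⁻¹ * S₁) := by linear_combination S₁ * hinv.symm
  refine ⟨htrace, htrace.trans ?_⟩
  have hinv : √T * T⁻¹ = (√T)⁻¹ := by rw [← div_eq_mul_inv, sqrt_div_self', one_div]
  rw [mul_add, ← mul_assoc, hinv]
  nlinarith [mul_nonneg (sqrt_nonneg T) hS₂]

/-- Trace bound: for `u ∈ H²_{0,•}(0,T)`,
`|u'(0)| ≤ (2/3)√T ‖u''‖_{L²} + T^{-1/2} ‖u'‖_{L²}`, and consequently
`|u'(0)| ≤ √T ‖u‖_{H²_{0,•}}` with `‖u‖_{H²_{0,•}} = ‖u''‖_{L²} + T⁻¹‖u'‖_{L²}`. -/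
theorem stmt_9 (T : ℝ) (hT : 0 < T)
    (u u' u'' : ℝ → ℝ)
    (hu : ∀ t ∈ Icc (0:ℝ) T, HasDerivAt u (u' t) t)
    (hu' : ∀ t ∈ Icc (0:ℝ) T, HasDerivAt u' (u'' t) t)
    (hu''c : ContinuousOn u'' (Icc (0:ℝ) T))
    (hu0 : u 0 = 0) :
    |u' 0| ≤ (2/3) * Real.sqrt T * Real.sqrt (∫ t in (0:ℝ)..T, (u'' t)^2) +
        (Real.sqrt T)⁻¹ * Real.sqrt (∫ t in (0:ℝ)..T, (u' t)^2) ∧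
      |u' 0| ≤ Real.sqrt T *
        (Real.sqrt (∫ t in (0:ℝ)..T, (u'' t)^2) +
          T⁻¹ * Real.sqrt (∫ t in (0:ℝ)..T, (u' t)^2)) :=
  stmt_9_general T hT u' u'' hu' hu''c
end

section
/- Let u ∈ H^2_{0,•}(0,T) solve a_μ(u, L_T w) = (f, ∂_t L_T w)_{L²} for all w ∈ H^2_{0,•}(0,T), and let u_h ∈ S_h solve the same equation restricted to test and trial functions in a finite-dimensional subspace S_h ⊂ H^2_{0,•}(0,T). Let Π_h u ∈ S_h be defined by a_0(Π_h u, L_T w_h) = a_0(u, L_T w_h) for all w_h ∈ S_h. Then ‖∂_t u_h − ∂_t Π_h u‖_{L²(0,T)} ≤ 2 e T μ ‖u − Π_h u‖_{L²(0,T)}. -/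
/-!
Put `v = u_h - Π_h u ∈ S_h` and test all three equations with `v`: Galerkin orthogonality and the
definition of `Π_h u` leave `a₀(v, L_T v) + μ (v, ∂_t L_T v) = μ (u - Π_h u, ∂_t L_T v)`.
Since `g e^{-t/T} g'` is the derivative of `e^{-t/T} g² / 2` plus `e^{-t/T} g² / (2T)`, taking
`g = ∂_t v` and `g = v` shows that the left side is at least `(2eT)⁻¹ ‖∂_t v‖²`, the weight
`e^{-t/T}` lying in `[e⁻¹, 1]` on `[0, T]`. By Cauchy–Schwarz the right side is at most
`μ ‖u - Π_h u‖ ‖∂_t v‖`.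
-/

open Real Set

/-- `a₀(u, L_T w)`, written through `∂_t L_T w = e^{-t/T} ∂_t w`. -/
noncomputable def a₀L (T : ℝ) (u w : ℝ → ℝ) : ℝ :=
  (∫ t in (0:ℝ)..T, deriv (deriv u) t * (Real.exp (-(t/T)) * deriv w t)) +
    deriv u 0 * (Real.exp (-((0:ℝ)/T)) * deriv w 0)

/-- `(u, ∂_t L_T w)_{L²(0,T)}`. -/
noncomputable def massL (T : ℝ) (u w : ℝ → ℝ) : ℝ :=
  ∫ t in (0:ℝ)..T, u t * (Real.exp (-(t/T)) * deriv w t)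

theorem sq_intervalIntegral_mul_le {f g : ℝ → ℝ} (hf : Continuous f) (hg : Continuous g)
    (a b : ℝ) :
    (∫ t in a..b, f t * g t) ^ 2 ≤ (∫ t in a..b, f t ^ 2) * ∫ t in a..b, g t ^ 2 := by
  wlog hab : a ≤ b generalizing a b
  · simpa only [intervalIntegral.integral_symm b a, neg_sq, neg_mul_neg] using
      this b a (le_of_not_ge hab)
  have hquad : ∀ s : ℝ, 0 ≤ (∫ t in a..b, f t ^ 2) * (s * s) + 2 * (∫ t in a..b, f t * g t) * s
      + ∫ t in a..b, g t ^ 2 := by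
    intro s
    have hexpand : ∫ t in a..b, (s * f t + g t) ^ 2 = (∫ t in a..b, f t ^ 2) * (s * s)
        + 2 * (∫ t in a..b, f t * g t) * s + ∫ t in a..b, g t ^ 2 := by
      rw [show (fun t => (s * f t + g t) ^ 2)
          = fun t => s * s * f t ^ 2 + 2 * s * (f t * g t) + g t ^ 2 from funext fun t => by ring,
        intervalIntegral.integral_add, intervalIntegral.integral_add,
        intervalIntegral.integral_const_mul, intervalIntegral.integral_const_mul]
      · ring
      all_goals exact Continuous.intervalIntegrable (by fun_prop) a b
    rw [← hexpand]
    exact intervalIntegral.integral_nonneg hab fun t _ => sq_nonneg _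
  have := discrim_le_zero hquad
  rw [discrim] at this
  linarith

theorem exp_neg_div_mem_Icc {T t : ℝ} (hT : 0 < T) (ht : t ∈ Icc 0 T) :
    Real.exp (-(t/T)) ∈ Icc (Real.exp (-1)) 1 := by
  have h0 : 0 ≤ t / T := div_nonneg ht.1 hT.le
  have h1 : t / T ≤ 1 := (div_le_one hT).mpr ht.2
  exact ⟨Real.exp_le_exp.mpr (by linarith), Real.exp_le_one_iff.mpr (by linarith)⟩

theorem intervalIntegral_mul_exp_neg_div_mul_deriv {g : ℝ → ℝ} (hg : ContDiff ℝ 1 g)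
    (T a b : ℝ) :
    ∫ t in a..b, g t * (Real.exp (-(t/T)) * deriv g t) =
      (Real.exp (-(b/T)) * g b ^ 2 - Real.exp (-(a/T)) * g a ^ 2) / 2 +
        (2 * T)⁻¹ * ∫ t in a..b, Real.exp (-(t/T)) * g t ^ 2 := by
  have hg' : Continuous (deriv g) := hg.continuous_deriv le_rfl
  have hderiv : ∀ t, HasDerivAt (fun s => Real.exp (-(s/T)) * g s ^ 2 / 2)
      (g t * (Real.exp (-(t/T)) * deriv g t) - (2 * T)⁻¹ * (Real.exp (-(t/T)) * g t ^ 2)) t := by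
    intro t
    have hexp : HasDerivAt (fun s => Real.exp (-(s/T))) (Real.exp (-(t/T)) * -(1/T)) t :=
      (((hasDerivAt_id t).div_const T).neg).exp
    have hsq : HasDerivAt (fun s => g s ^ 2) (2 * g t * deriv g t) t := by
      simpa using (hg.differentiable one_ne_zero t).hasDerivAt.fun_pow 2
    refine ((hexp.fun_mul hsq).div_const 2).congr_deriv ?_
    ring
  have hFTC := intervalIntegral.integral_eq_sub_of_hasDerivAt (fun t _ => hderiv t)
    (Continuous.intervalIntegrable (by fun_prop) a b)
  rw [intervalIntegral.integral_sub, intervalIntegral.integral_const_mul] at hFTC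
  · linarith
  all_goals exact Continuous.intervalIntegrable (by fun_prop) a b

section Forms

variable {T : ℝ}

theorem a₀L_sub_left {u v w : ℝ → ℝ} (hu : ContDiff ℝ 2 u) (hv : ContDiff ℝ 2 v)
    (hw : Continuous (deriv w)) : a₀L T (u - v) w = a₀L T u w - a₀L T v w := by
  have hd : deriv (u - v) = deriv u - deriv v := funext fun t =>
    deriv_sub (hu.differentiable (by norm_num) t) (hv.differentiable (by norm_num) t)
  have hdd : deriv (deriv (u - v)) = deriv (deriv u) - deriv (deriv v) := by
    rw [hd]
    exact funext fun t =>
      deriv_sub (hu.deriv'.differentiable one_ne_zero t) (hv.deriv'.differentiable one_ne_zero t)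
  have hu'' : Continuous (deriv (deriv u)) := hu.deriv'.continuous_deriv le_rfl
  have hv'' : Continuous (deriv (deriv v)) := hv.deriv'.continuous_deriv le_rfl
  rw [a₀L, a₀L, a₀L, hdd, hd]
  simp only [Pi.sub_apply, sub_mul]
  rw [intervalIntegral.integral_sub (Continuous.intervalIntegrable (by fun_prop) _ _)
    (Continuous.intervalIntegrable (by fun_prop) _ _)]
  ring

theorem massL_sub_left {u v w : ℝ → ℝ} (hu : Continuous u) (hv : Continuous v)
    (hw : Continuous (deriv w)) : massL T (u - v) w = massL T u w - massL T v w := by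
  simp only [massL, Pi.sub_apply, sub_mul]
  exact intervalIntegral.integral_sub (Continuous.intervalIntegrable (by fun_prop) _ _)
    (Continuous.intervalIntegrable (by fun_prop) _ _)

theorem a₀L_self_ge (hT : 0 < T) {v : ℝ → ℝ} (hv : ContDiff ℝ 2 v) :
    (2 * Real.exp 1 * T)⁻¹ * ∫ t in (0:ℝ)..T, deriv v t ^ 2 ≤ a₀L T v v := by
  have hv' : ContDiff ℝ 1 (deriv v) := hv.deriv'
  have hv'c : Continuous (deriv v) := hv'.continuous
  have hswap : ∫ t in (0:ℝ)..T, deriv (deriv v) t * (Real.exp (-(t/T)) * deriv v t)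
      = ∫ t in (0:ℝ)..T, deriv v t * (Real.exp (-(t/T)) * deriv (deriv v) t) :=
    intervalIntegral.integral_congr fun t _ => by ring
  have hweight : Real.exp (-1) * ∫ t in (0:ℝ)..T, deriv v t ^ 2
      ≤ ∫ t in (0:ℝ)..T, Real.exp (-(t/T)) * deriv v t ^ 2 := by
    rw [← intervalIntegral.integral_const_mul]
    exact intervalIntegral.integral_mono_on hT.le (Continuous.intervalIntegrable (by fun_prop) _ _)
      (Continuous.intervalIntegrable (by fun_prop) _ _) fun t ht =>
        mul_le_mul_of_nonneg_right (exp_neg_div_mem_Icc hT ht).1 (sq_nonneg _)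
  have hend : 0 ≤ Real.exp (-(T/T)) * deriv v T ^ 2 := by positivity
  rw [a₀L, hswap, intervalIntegral_mul_exp_neg_div_mul_deriv hv' T 0 T]
  simp only [zero_div, neg_zero, Real.exp_zero, one_mul]
  calc (2 * Real.exp 1 * T)⁻¹ * ∫ t in (0:ℝ)..T, deriv v t ^ 2
      = (2 * T)⁻¹ * (Real.exp (-1) * ∫ t in (0:ℝ)..T, deriv v t ^ 2) := by
        rw [Real.exp_neg]; ring
    _ ≤ (2 * T)⁻¹ * ∫ t in (0:ℝ)..T, Real.exp (-(t/T)) * deriv v t ^ 2 := by gcongr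
    _ ≤ _ := by linarith [sq_nonneg (deriv v 0)]

theorem massL_self_nonneg (hT : 0 < T) {v : ℝ → ℝ} (hv : ContDiff ℝ 1 v) (hv0 : v 0 = 0) :
    0 ≤ massL T v v := by
  have hW : 0 ≤ ∫ t in (0:ℝ)..T, Real.exp (-(t/T)) * v t ^ 2 :=
    intervalIntegral.integral_nonneg hT.le fun t _ => by positivity
  rw [massL, intervalIntegral_mul_exp_neg_div_mul_deriv hv T 0 T, hv0]
  have hend : 0 ≤ Real.exp (-(T/T)) * v T ^ 2 := by positivity
  have hweighted : 0 ≤ (2 * T)⁻¹ * ∫ t in (0:ℝ)..T, Real.exp (-(t/T)) * v t ^ 2 := by positivity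
  linarith

theorem massL_le_sqrt_mul_sqrt (hT : 0 < T) {u w : ℝ → ℝ} (hu : Continuous u)
    (hw : Continuous (deriv w)) :
    massL T u w ≤ √(∫ t in (0:ℝ)..T, u t ^ 2) * √(∫ t in (0:ℝ)..T, deriv w t ^ 2) := by
  have hCS := sq_intervalIntegral_mul_le (g := fun t => Real.exp (-(t/T)) * deriv w t) hu
    (by fun_prop) 0 T
  have hweight : ∫ t in (0:ℝ)..T, (Real.exp (-(t/T)) * deriv w t) ^ 2
      ≤ ∫ t in (0:ℝ)..T, deriv w t ^ 2 :=
    intervalIntegral.integral_mono_on hT.le (Continuous.intervalIntegrable (by fun_prop) _ _)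
      (Continuous.intervalIntegrable (by fun_prop) _ _) fun t ht => by
        rw [mul_pow]
        exact mul_le_of_le_one_left (sq_nonneg _)
          (pow_le_one₀ (Real.exp_pos _).le (exp_neg_div_mem_Icc hT ht).2)
  have hu2 : 0 ≤ ∫ t in (0:ℝ)..T, u t ^ 2 :=
    intervalIntegral.integral_nonneg hT.le fun t _ => sq_nonneg _
  calc massL T u w ≤ |massL T u w| := le_abs_self _
    _ ≤ √((∫ t in (0:ℝ)..T, u t ^ 2) * ∫ t in (0:ℝ)..T, (Real.exp (-(t/T)) * deriv w t) ^ 2) :=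
      Real.abs_le_sqrt hCS
    _ ≤ _ := by
      rw [Real.sqrt_mul hu2]
      gcongr

theorem a₀L_add_mul_massL_self_ge (hT : 0 < T) {μ : ℝ} (hμ : 0 ≤ μ) {v : ℝ → ℝ}
    (hv : ContDiff ℝ 2 v) (hv0 : v 0 = 0) :
    (2 * Real.exp 1 * T)⁻¹ * ∫ t in (0:ℝ)..T, deriv v t ^ 2 ≤ a₀L T v v + μ * massL T v v := by
  linarith [a₀L_self_ge hT hv, mul_nonneg hμ (massL_self_nonneg hT (hv.of_le one_le_two) hv0)]

theorem a₀L_add_mul_massL_sub_eq {μ : ℝ} {u uh Pu v : ℝ → ℝ} (hu : ContDiff ℝ 2 u)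
    (huh : ContDiff ℝ 2 uh) (hPu : ContDiff ℝ 2 Pu) (hv : Continuous (deriv v))
    (hgalerkin : a₀L T uh v + μ * massL T uh v = a₀L T u v + μ * massL T u v)
    (hproj : a₀L T Pu v = a₀L T u v) :
    a₀L T (uh - Pu) v + μ * massL T (uh - Pu) v = μ * massL T (u - Pu) v := by
  rw [a₀L_sub_left huh hPu hv, massL_sub_left huh.continuous hPu.continuous hv,
    massL_sub_left hu.continuous hPu.continuous hv]
  linarith

end Forms

theorem sqrt_le_of_le_mul_sqrt {x c : ℝ} (hc : 0 ≤ c) (h : x ≤ c * √x) : √x ≤ c := by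
  rcases (Real.sqrt_nonneg x).eq_or_lt with hzero | hpos
  · rw [← hzero]
    exact hc
  · refine le_of_mul_le_mul_right ?_ hpos
    rwa [Real.mul_self_sqrt (Real.sqrt_pos.mp hpos).le]

theorem stmt_14_general (T μ : ℝ) (hT : 0 < T) (hμ : 0 < μ)
    (f : ℝ → ℝ)
    (S : Submodule ℝ (ℝ → ℝ))
    (hS : ∀ v ∈ S, ContDiff ℝ 2 v ∧ v 0 = 0)
    (u : ℝ → ℝ) (hu : ContDiff ℝ 2 u)
    (hsol : ∀ w : ℝ → ℝ, ContDiff ℝ 2 w → w 0 = 0 →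
      (∫ t in (0:ℝ)..T, deriv (deriv u) t * (Real.exp (-(t/T)) * deriv w t)) +
          deriv u 0 * (Real.exp (-((0:ℝ)/T)) * deriv w 0) +
          μ * ∫ t in (0:ℝ)..T, u t * (Real.exp (-(t/T)) * deriv w t)
        = ∫ t in (0:ℝ)..T, f t * (Real.exp (-(t/T)) * deriv w t))
    (uh : ℝ → ℝ) (huh : uh ∈ S)
    (hsolh : ∀ wh ∈ S,
      (∫ t in (0:ℝ)..T, deriv (deriv uh) t * (Real.exp (-(t/T)) * deriv wh t)) +
          deriv uh 0 * (Real.exp (-((0:ℝ)/T)) * deriv wh 0) +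
          μ * ∫ t in (0:ℝ)..T, uh t * (Real.exp (-(t/T)) * deriv wh t)
        = ∫ t in (0:ℝ)..T, f t * (Real.exp (-(t/T)) * deriv wh t))
    (Pu : ℝ → ℝ) (hPu : Pu ∈ S)
    (hproj : ∀ wh ∈ S,
      (∫ t in (0:ℝ)..T, deriv (deriv Pu) t * (Real.exp (-(t/T)) * deriv wh t)) +
          deriv Pu 0 * (Real.exp (-((0:ℝ)/T)) * deriv wh 0)
        = (∫ t in (0:ℝ)..T, deriv (deriv u) t * (Real.exp (-(t/T)) * deriv wh t)) +
          deriv u 0 * (Real.exp (-((0:ℝ)/T)) * deriv wh 0)) :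
    Real.sqrt (∫ t in (0:ℝ)..T, (deriv uh t - deriv Pu t)^2)
      ≤ 2 * Real.exp 1 * T * μ * Real.sqrt (∫ t in (0:ℝ)..T, (u t - Pu t)^2) := by
  have hv : uh - Pu ∈ S := S.sub_mem huh hPu
  obtain ⟨hv2, hv0⟩ := hS _ hv
  obtain ⟨huh2, -⟩ := hS uh huh
  obtain ⟨hPu2, -⟩ := hS Pu hPu
  have hv' : Continuous (deriv (uh - Pu)) := hv2.continuous_deriv (by norm_num)
  have herror := a₀L_add_mul_massL_sub_eq hu huh2 hPu2 hv'
    ((hsolh _ hv).trans (hsol _ hv2 hv0).symm) (hproj _ hv)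
  have hCS := massL_le_sqrt_mul_sqrt hT (hu.continuous.sub hPu2.continuous) hv'
  simp only [Pi.sub_apply] at hCS
  have hX : ∫ t in (0:ℝ)..T, (deriv uh t - deriv Pu t) ^ 2
      = ∫ t in (0:ℝ)..T, deriv (uh - Pu) t ^ 2 := intervalIntegral.integral_congr fun t _ => by
    rw [deriv_sub (huh2.differentiable (by norm_num) t) (hPu2.differentiable (by norm_num) t)]
  rw [hX]
  refine sqrt_le_of_le_mul_sqrt (by positivity) ?_
  have hcoercive := a₀L_add_mul_massL_self_ge hT hμ.le hv2 hv0
  rw [herror, inv_mul_le_iff₀ (by positivity)] at hcoercive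
  linarith [mul_le_mul_of_nonneg_left hCS (by positivity : 0 ≤ 2 * Real.exp 1 * T * μ)]

/-- Let `u` solve `a_μ(u, L_T w) = (f, ∂_t L_T w)` for all `w ∈ H²_{0,•}(0,T)`, let
`u_h ∈ S_h` solve the Galerkin-discretized problem, and let `Π_h u ∈ S_h` be defined by
`a₀(Π_h u, L_T w_h) = a₀(u, L_T w_h)` for all `w_h ∈ S_h`. Then
`‖∂_t u_h − ∂_t Π_h u‖_{L²} ≤ 2eTμ ‖u − Π_h u‖_{L²}`. -/
theorem stmt_14 (T μ : ℝ) (hT : 0 < T) (hμ : 0 < μ)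
    (f : ℝ → ℝ) (hf : ContinuousOn f (Icc (0:ℝ) T))
    (S : Submodule ℝ (ℝ → ℝ)) (hfin : FiniteDimensional ℝ S)
    (hS : ∀ v ∈ S, ContDiff ℝ 2 v ∧ v 0 = 0)
    (u : ℝ → ℝ) (hu : ContDiff ℝ 2 u) (hu0 : u 0 = 0)
    (hsol : ∀ w : ℝ → ℝ, ContDiff ℝ 2 w → w 0 = 0 →
      (∫ t in (0:ℝ)..T, deriv (deriv u) t * (Real.exp (-(t/T)) * deriv w t)) +
          deriv u 0 * (Real.exp (-((0:ℝ)/T)) * deriv w 0) +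
          μ * ∫ t in (0:ℝ)..T, u t * (Real.exp (-(t/T)) * deriv w t)
        = ∫ t in (0:ℝ)..T, f t * (Real.exp (-(t/T)) * deriv w t))
    (uh : ℝ → ℝ) (huh : uh ∈ S)
    (hsolh : ∀ wh ∈ S,
      (∫ t in (0:ℝ)..T, deriv (deriv uh) t * (Real.exp (-(t/T)) * deriv wh t)) +
          deriv uh 0 * (Real.exp (-((0:ℝ)/T)) * deriv wh 0) +
          μ * ∫ t in (0:ℝ)..T, uh t * (Real.exp (-(t/T)) * deriv wh t)
        = ∫ t in (0:ℝ)..T, f t * (Real.exp (-(t/T)) * deriv wh t))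
    (Pu : ℝ → ℝ) (hPu : Pu ∈ S)
    (hproj : ∀ wh ∈ S,
      (∫ t in (0:ℝ)..T, deriv (deriv Pu) t * (Real.exp (-(t/T)) * deriv wh t)) +
          deriv Pu 0 * (Real.exp (-((0:ℝ)/T)) * deriv wh 0)
        = (∫ t in (0:ℝ)..T, deriv (deriv u) t * (Real.exp (-(t/T)) * deriv wh t)) +
          deriv u 0 * (Real.exp (-((0:ℝ)/T)) * deriv wh 0)) :
    Real.sqrt (∫ t in (0:ℝ)..T, (deriv uh t - deriv Pu t)^2)
      ≤ 2 * Real.exp 1 * T * μ * Real.sqrt (∫ t in (0:ℝ)..T, (u t - Pu t)^2) :=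
  stmt_14_general T μ hT hμ f S hS u hu hsol uh huh hsolh Pu hPu hproj
end

section
/- Let w : [-T,T] → ℝ₊ satisfy w(t+s) = w(t)w(s) whenever t,s,t+s ∈ [-T,T], and w(t) = 1 + O(t) as |t| → 0. Let {P_r^h}_{r≥0} be the orthogonal polynomials on [0,h] with respect to the weighted inner product (u,v)_w = ∫_0^h u v w dt, normalized so that P_r^h(h)=1, and let {L_r} be the Legendre polynomials on [0,1] with L_r(1)=1. Then for each fixed r, P_r^h(t) = L_r(t/h) + O(h) uniformly for t ∈ [0,h] as h → 0. -/
/-!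
Rescale `[0, h]` to `[0, 1]`: the coefficient vectors `c_h` of `s ↦ P_r^h(h s)` and `l` of `L_r`
solve `A_h c_h = e` and `A_0 l = e`, where row `j < r` of the moment matrix `A_h` expresses
orthogonality to `s ^ j` for the weight `w(h s)` and the last row the normalization at `1`.
Multiplicativity makes `w` Lipschitz, and `|w(h s) - 1| ≤ C₀ h` gives `‖A_h - A_0‖ = O(h)`.
`A_0` is invertible by uniqueness of the Legendre polynomial, so
`c_h - l = A_0⁻¹ (A_0 - A_h) c_h = O(h)`, which bounds `P_r^h(t) - L_r(t / h)` uniformly.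
-/

open Real Set Polynomial MeasureTheory Matrix

attribute [local instance] Matrix.linftyOpSeminormedAddCommGroup Matrix.linftyOpNormedAddCommGroup

theorem Matrix.linfty_opNorm_le_card_mul_of_forall_norm_le {m n α : Type*} [Fintype m]
    [Fintype n] [SeminormedAddCommGroup α] {A : Matrix m n α} {ε : ℝ} (hε : 0 ≤ ε)
    (hA : ∀ i j, ‖A i j‖ ≤ ε) :
    ‖A‖ ≤ Fintype.card n * ε := by
  change ‖fun i => WithLp.toLp 1 (A i)‖ ≤ _
  refine (pi_norm_le_iff_of_nonneg (by positivity)).2 fun i => ?_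
  rw [PiLp.norm_eq_of_L1]
  calc ∑ j, ‖A i j‖ ≤ ∑ _j : n, ε := Finset.sum_le_sum fun j _ => hA i j
    _ = Fintype.card n * ε := by simp

theorem Matrix.norm_sub_le_of_mulVec_eq {n α : Type*} [Fintype n] [NormedRing α] [DecidableEq n]
    {A₀ A B : Matrix n n α} {c l e : n → α} {δ : ℝ} (hB : B * A₀ = 1)
    (hl : A₀ *ᵥ l = e) (hc : A *ᵥ c = e) (hA : ‖A - A₀‖ ≤ δ) (hsmall : ‖B‖ * δ ≤ 1 / 2) :
    ‖c - l‖ ≤ 2 * ‖B‖ * δ * ‖l‖ := by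
  have hrep : c - l = B *ᵥ ((A₀ - A) *ᵥ c) := by
    rw [Matrix.sub_mulVec, hc, ← hl, ← Matrix.mulVec_sub, Matrix.mulVec_mulVec, hB,
      Matrix.one_mulVec]
  have hδ : 0 ≤ δ := (norm_nonneg _).trans hA
  have key : ‖c - l‖ ≤ ‖B‖ * δ * (‖l‖ + ‖c - l‖) :=
    calc ‖c - l‖ ≤ ‖B‖ * (‖A₀ - A‖ * ‖c‖) := by
          rw [hrep]
          exact (linfty_opNorm_mulVec _ _).trans
            (mul_le_mul_of_nonneg_left (linfty_opNorm_mulVec _ _) (norm_nonneg _))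
      _ ≤ ‖B‖ * (δ * (‖l‖ + ‖c - l‖)) := by
          rw [norm_sub_rev]
          gcongr
          simpa using norm_add_le l (c - l)
      _ = ‖B‖ * δ * (‖l‖ + ‖c - l‖) := by ring
  nlinarith [norm_nonneg (c - l), norm_nonneg l, mul_nonneg (norm_nonneg B) hδ]

theorem Polynomial.eq_zero_of_intervalIntegral_sq_eq_zero {a b : ℝ} (hab : a < b) {q : ℝ[X]}
    (hq : ∫ x in a..b, q.eval x ^ 2 = 0) : q = 0 := by
  by_contra hq0
  obtain ⟨c, hc, hcq⟩ := ((Icc_infinite hab).sdiff (q.finite_setOfPred_isRoot hq0)).nonempty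
  have : 0 < ∫ x in a..b, q.eval x ^ 2 :=
    intervalIntegral.integral_pos hab (q.continuous.pow 2).continuousOn
      (fun x _ => sq_nonneg _) ⟨c, hc, sq_pos_of_ne_zero hcq⟩
  linarith

theorem intervalIntegral.integral_mul_eval_eq_zero_of_degree_lt {a b : ℝ} {f : ℝ → ℝ} {r : ℕ}
    (hf : IntervalIntegrable f volume a b) (horth : ∀ j < r, ∫ x in a..b, f x * x ^ j = 0)
    {q : ℝ[X]} (hq : q.degree < r) : ∫ x in a..b, f x * q.eval x = 0 := by
  by_cases hq0 : q = 0
  · simp [hq0]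
  have hqr : q.natDegree < r := (natDegree_lt_iff_degree_lt hq0).mpr hq
  simp_rw [q.eval_eq_sum_range, Finset.mul_sum, mul_left_comm (f _)]
  rw [intervalIntegral.integral_finsetSum fun j _ =>
    (hf.mul_continuousOn (continuous_pow j).continuousOn).const_mul _]
  refine Finset.sum_eq_zero fun j hj => ?_
  rw [intervalIntegral.integral_const_mul, horth j (by grind), mul_zero]

theorem Polynomial.eq_zero_of_orthogonal_of_eval_one_eq_zero {r : ℕ} {L p : ℝ[X]}
    (hL : L.natDegree = r) (hL1 : L.eval 1 ≠ 0)
    (hLorth : ∀ q : ℝ[X], q.degree < r → ∫ t in (0:ℝ)..1, L.eval t * q.eval t = 0)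
    (hp : p.natDegree ≤ r)
    (hporth : ∀ q : ℝ[X], q.degree < r → ∫ t in (0:ℝ)..1, p.eval t * q.eval t = 0)
    (hp1 : p.eval 1 = 0) : p = 0 := by
  have hLr : L.coeff r ≠ 0 := by
    rw [← hL, coeff_natDegree, leadingCoeff_ne_zero]
    rintro rfl
    simp at hL1
  -- `q` has degree `< r`, so it is orthogonal to both `p` and `L`, hence to itself.
  set q := C (L.coeff r) * p - C (p.coeff r) * L
  have hq : q.degree < r := by
    refine (degree_lt_iff_coeff_zero _ _).2 fun m hm => ?_
    obtain rfl | hrm := (Nat.cast_le.1 hm).eq_or_lt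
    · simp [q, mul_comm]
    · simp [q, coeff_eq_zero_of_natDegree_lt (hp.trans_lt hrm),
        coeff_eq_zero_of_natDegree_lt (hL.trans_lt hrm)]
  have hq0 : q = 0 := by
    refine eq_zero_of_intervalIntegral_sq_eq_zero one_pos ?_
    have hint (f : ℝ[X]) : IntervalIntegrable (fun t => f.eval t * q.eval t) volume 0 1 :=
      (f.continuous.mul q.continuous).intervalIntegrable _ _
    calc ∫ t in (0:ℝ)..1, q.eval t ^ 2
        = ∫ t in (0:ℝ)..1,
            L.coeff r * (p.eval t * q.eval t) - p.coeff r * (L.eval t * q.eval t) := by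
          congr 1; ext t; simp only [q, eval_sub, eval_mul, eval_C]; ring
      _ = 0 := by
          rw [intervalIntegral.integral_sub ((hint p).const_mul _) ((hint L).const_mul _),
            intervalIntegral.integral_const_mul, intervalIntegral.integral_const_mul,
            hporth q hq, hLorth q hq]
          ring
  have hCp : C (L.coeff r) * p = C (p.coeff r) * L := sub_eq_zero.1 hq0
  have hpr : p.coeff r = 0 := by
    simpa [hp1, hL1] using congrArg (eval 1) hCp
  simpa [hpr, hLr] using hCp

/-- Row `j < r` pairs a coefficient vector with `s ^ j` in `L²([0, 1], ω ds)`; the last row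
evaluates the polynomial at `1`. -/
noncomputable def momentMatrix (r : ℕ) (ω : ℝ → ℝ) : Matrix (Fin (r + 1)) (Fin (r + 1)) ℝ :=
  Matrix.of fun j i => if (j : ℕ) < r then ∫ s in (0:ℝ)..1, s ^ ((i : ℕ) + j) * ω s else 1

def coeffVec (r : ℕ) (p : ℝ[X]) : Fin (r + 1) → ℝ := fun i => p.coeff i

theorem coeffVec_sub (r : ℕ) (p q : ℝ[X]) :
    coeffVec r (p - q) = coeffVec r p - coeffVec r q := by
  ext i; simp [coeffVec]

theorem eval_eq_sum_coeffVec {r : ℕ} {p : ℝ[X]} (hp : p.natDegree ≤ r) (x : ℝ) :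
    p.eval x = ∑ i : Fin (r + 1), coeffVec r p i * x ^ (i : ℕ) := by
  rw [eval_eq_sum_range' (Nat.lt_succ_of_le hp), ← Fin.sum_univ_eq_sum_range]
  rfl

theorem abs_eval_le_norm_coeffVec_of_mem_Icc {r : ℕ} {p : ℝ[X]} (hp : p.natDegree ≤ r) {x : ℝ}
    (hx : x ∈ Icc (0:ℝ) 1) : |p.eval x| ≤ (r + 1) * ‖coeffVec r p‖ := by
  rw [eval_eq_sum_coeffVec hp]
  calc |∑ i : Fin (r + 1), coeffVec r p i * x ^ (i : ℕ)|
      ≤ ∑ i : Fin (r + 1), |coeffVec r p i * x ^ (i : ℕ)| := Finset.abs_sum_le_sum_abs _ _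
    _ ≤ ∑ _i : Fin (r + 1), ‖coeffVec r p‖ := by
        refine Finset.sum_le_sum fun i _ => ?_
        rw [abs_mul, abs_of_nonneg (pow_nonneg hx.1 _)]
        exact mul_le_of_le_one_right (abs_nonneg _) (pow_le_one₀ hx.1 hx.2) |>.trans
          (norm_le_pi_norm (coeffVec r p) i)
    _ = (r + 1) * ‖coeffVec r p‖ := by simp

theorem momentMatrix_mulVec_coeffVec_apply {r : ℕ} {ω : ℝ → ℝ} {p : ℝ[X]}
    (hp : p.natDegree ≤ r) (hω : IntervalIntegrable ω volume 0 1) (j : Fin (r + 1)) :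
    (momentMatrix r ω *ᵥ coeffVec r p) j =
      if (j : ℕ) < r then ∫ s in (0:ℝ)..1, p.eval s * s ^ (j : ℕ) * ω s else p.eval 1 := by
  simp only [mulVec, dotProduct, momentMatrix, of_apply]
  split_ifs
  · simp_rw [eval_eq_sum_coeffVec hp, Finset.sum_mul]
    rw [intervalIntegral.integral_finsetSum fun i _ => hω.continuousOn_mul (by fun_prop)]
    refine Finset.sum_congr rfl fun i _ => ?_
    rw [← intervalIntegral.integral_mul_const]
    congr 1
    ext s
    ring
  · simp [eval_eq_sum_coeffVec hp]

theorem momentMatrix_mulVec_coeffVec {r : ℕ} {ω : ℝ → ℝ} {p : ℝ[X]}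
    (hp : p.natDegree ≤ r) (hω : IntervalIntegrable ω volume 0 1)
    (horth : ∀ j < r, ∫ s in (0:ℝ)..1, p.eval s * s ^ j * ω s = 0) (hp1 : p.eval 1 = 1) :
    momentMatrix r ω *ᵥ coeffVec r p = Pi.single (Fin.last r) 1 := by
  ext j
  rw [momentMatrix_mulVec_coeffVec_apply hp hω]
  split_ifs with hj
  · rw [horth j hj, Pi.single_eq_of_ne (Fin.ne_last_of_lt (show j < Fin.last r from hj))]
  · rw [hp1, Fin.eq_last_of_not_lt hj, Pi.single_eq_same]

theorem isUnit_momentMatrix_one {r : ℕ} {L : ℝ[X]} (hL : L.natDegree = r) (hL1 : L.eval 1 ≠ 0)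
    (hLorth : ∀ q : ℝ[X], q.degree < r → ∫ t in (0:ℝ)..1, L.eval t * q.eval t = 0) :
    IsUnit (momentMatrix r 1) := by
  rw [← mulVec_injective_iff_isUnit]
  intro u v huv
  rw [← sub_eq_zero]
  set p : ℝ[X] := ((degreeLTEquiv ℝ (r + 1)).symm (u - v) : ℝ[X])
  have hpv : coeffVec r p = u - v := (degreeLTEquiv ℝ (r + 1)).apply_symm_apply (u - v)
  have hp : p.natDegree ≤ r := by
    have hmem : p ∈ degreeLT ℝ (r + 1) := ((degreeLTEquiv ℝ (r + 1)).symm (u - v)).2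
    rw [degreeLT_succ_eq_degreeLE, mem_degreeLE] at hmem
    exact natDegree_le_iff_degree_le.2 hmem
  have hker : momentMatrix r 1 *ᵥ coeffVec r p = 0 := by rw [hpv, mulVec_sub, huv, sub_self]
  have hrow (j : Fin (r + 1)) := (momentMatrix_mulVec_coeffVec_apply hp
    (intervalIntegrable_const (c := (1:ℝ))) j).symm.trans (congrFun hker j)
  have hp0 : p = 0 := by
    refine eq_zero_of_orthogonal_of_eval_one_eq_zero hL hL1 hLorth hp (fun q hq => ?_)
      (by simpa using hrow (Fin.last r))
    refine intervalIntegral.integral_mul_eval_eq_zero_of_degree_lt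
      (p.continuous.intervalIntegrable _ _) (fun j hj => ?_) hq
    simpa [hj] using hrow ⟨j, by omega⟩
  rw [← hpv, hp0]
  rfl

theorem norm_momentMatrix_sub_le {r : ℕ} {ω : ℝ → ℝ} {ε : ℝ}
    (hω : IntervalIntegrable ω volume 0 1) (hε : ∀ s ∈ Icc (0:ℝ) 1, |ω s - 1| ≤ ε) :
    ‖momentMatrix r ω - momentMatrix r 1‖ ≤ (r + 1) * ε := by
  have hε0 : 0 ≤ ε := (abs_nonneg _).trans (hε 1 ⟨zero_le_one, le_rfl⟩)
  have := linfty_opNorm_le_card_mul_of_forall_norm_le hε0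
    (A := momentMatrix r ω - momentMatrix r 1) ?_
  · simpa using this
  intro j i
  simp only [momentMatrix, Matrix.sub_apply, of_apply]
  split_ifs
  · rw [← intervalIntegral.integral_sub
      (hω.continuousOn_mul (g := fun s => s ^ ((i : ℕ) + j)) (by fun_prop))
      (Continuous.intervalIntegrable (by fun_prop) _ _)]
    calc ‖∫ s in (0:ℝ)..1, s ^ ((i : ℕ) + j) * ω s - s ^ ((i : ℕ) + j) * (1 : ℝ → ℝ) s‖
        ≤ ε * |1 - 0| := by
          refine intervalIntegral.norm_integral_le_of_norm_le_const fun s hs => ?_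
          rw [uIoc_of_le zero_le_one] at hs
          rw [Pi.one_apply, ← mul_sub, norm_mul, Real.norm_eq_abs, Real.norm_eq_abs,
            abs_of_nonneg (pow_nonneg hs.1.le _)]
          exact (mul_le_of_le_one_left (abs_nonneg _) (pow_le_one₀ hs.1.le hs.2)).trans
            (hε s (Ioc_subset_Icc_self hs))
      _ = ε := by simp
  · simpa using hε0

theorem continuousOn_Icc_of_map_add_eq_mul {T C₀ : ℝ} {w : ℝ → ℝ} (hC₀ : 0 ≤ C₀)
    (hmul : ∀ t s : ℝ, t ∈ Icc (-T) T → s ∈ Icc (-T) T → t + s ∈ Icc (-T) T →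
      w (t + s) = w t * w s)
    (hw1 : ∀ t ∈ Icc (-T) T, |w t - 1| ≤ C₀ * |t|) :
    ContinuousOn w (Icc 0 T) := by
  refine (LipschitzOnWith.of_dist_le_mul (K := Real.toNNReal ((1 + C₀ * T) * C₀))
    fun x hx y hy => ?_).continuousOn
  have hT : 0 ≤ T := hx.1.trans hx.2
  have hIcc : Icc 0 T ⊆ Icc (-T) T := Icc_subset_Icc (by linarith) le_rfl
  have hxy : x - y ∈ Icc (-T) T := ⟨by linarith [hx.1, hy.2], by linarith [hx.2, hy.1]⟩
  have hwx : w x = w y * w (x - y) := by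
    simpa using hmul y (x - y) (hIcc hy) hxy (by simpa using hIcc hx)
  have hwy : |w y| ≤ 1 + C₀ * T := by
    have h1 := abs_sub_abs_le_abs_sub (w y) 1
    have h2 := hw1 y (hIcc hy)
    rw [abs_one] at h1
    rw [abs_of_nonneg hy.1] at h2
    nlinarith [hy.2]
  rw [Real.dist_eq, Real.dist_eq, Real.coe_toNNReal _ (by positivity), hwx,
    show w y * w (x - y) - w y = w y * (w (x - y) - 1) by ring, abs_mul, mul_assoc]
  exact mul_le_mul hwy (hw1 _ hxy) (abs_nonneg _) (by positivity)

theorem intervalIntegrable_comp_mul_of_continuousOn {T h : ℝ} {w : ℝ → ℝ}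
    (hw : ContinuousOn w (Icc 0 T)) (hh : 0 ≤ h) (hhT : h ≤ T) :
    IntervalIntegrable (fun s => w (h * s)) volume 0 1 := by
  refine ContinuousOn.intervalIntegrable (hw.comp (by fun_prop) fun s hs => ?_)
  rw [uIcc_of_le zero_le_one] at hs
  exact ⟨mul_nonneg hh hs.1, by nlinarith [hs.1, hs.2]⟩

theorem abs_comp_mul_sub_one_le {T C₀ h s : ℝ} {w : ℝ → ℝ} (hC₀ : 0 ≤ C₀)
    (hw1 : ∀ t ∈ Icc (-T) T, |w t - 1| ≤ C₀ * |t|) (hh : 0 ≤ h) (hhT : h ≤ T)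
    (hs : s ∈ Icc (0:ℝ) 1) : |w (h * s) - 1| ≤ C₀ * h := by
  have hhs : h * s ∈ Icc (-T) T := ⟨by nlinarith [hs.1], by nlinarith [hs.1, hs.2]⟩
  calc |w (h * s) - 1| ≤ C₀ * |h * s| := hw1 _ hhs
    _ ≤ C₀ * h := by
      rw [abs_of_nonneg (mul_nonneg hh hs.1)]
      nlinarith [mul_nonneg (mul_nonneg hC₀ hh) (sub_nonneg.2 hs.2)]

theorem integral_comp_C_mul_X_mul_pow_eq_zero {P : ℝ[X]} {w : ℝ → ℝ} {h : ℝ} {r j : ℕ}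
    (hh : h ≠ 0)
    (horth : ∀ q : ℝ[X], q.degree < r → ∫ t in (0:ℝ)..h, P.eval t * q.eval t * w t = 0)
    (hj : j < r) :
    ∫ s in (0:ℝ)..1, (P.comp (C h * X)).eval s * s ^ j * w (h * s) = 0 := by
  set q : ℝ[X] := C (h⁻¹ ^ j) * X ^ j
  have hq : q.degree < r := (degree_C_mul_X_pow_le _ _).trans_lt (by exact_mod_cast hj)
  calc ∫ s in (0:ℝ)..1, (P.comp (C h * X)).eval s * s ^ j * w (h * s)
      = ∫ s in (0:ℝ)..1, P.eval (h * s) * q.eval (h * s) * w (h * s) := by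
        congr 1; ext s
        simp [q, mul_pow, hh]
    _ = h⁻¹ • ∫ t in h * 0..h * 1, P.eval t * q.eval t * w t :=
        intervalIntegral.integral_comp_mul_left (fun t => P.eval t * q.eval t * w t) hh
    _ = 0 := by simp [horth q hq]

theorem natDegree_comp_C_mul_X_le {r : ℕ} {P : ℝ[X]} (hP : P.natDegree ≤ r) (h : ℝ) :
    (P.comp (C h * X)).natDegree ≤ r :=
  natDegree_comp_le.trans <| (Nat.mul_le_mul hP
    ((natDegree_C_mul_le h X).trans natDegree_X_le)).trans_eq (mul_one r)

theorem abs_eval_sub_eval_div_le {r : ℕ} {P L : ℝ[X]} {h t : ℝ} (hP : P.natDegree ≤ r)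
    (hL : L.natDegree ≤ r) (hh : 0 < h) (ht : t ∈ Icc 0 h) :
    |P.eval t - L.eval (t / h)| ≤ (r + 1) * ‖coeffVec r (P.comp (C h * X)) - coeffVec r L‖ := by
  rw [← coeffVec_sub]
  convert abs_eval_le_norm_coeffVec_of_mem_Icc
    ((natDegree_sub_le _ _).trans (max_le (natDegree_comp_C_mul_X_le hP h) hL))
    ⟨div_nonneg ht.1 hh.le, div_le_one_of_le₀ ht.2 hh.le⟩ using 2
  simp [mul_div_cancel₀ _ hh.ne']

theorem stmt_17_general (T : ℝ) (w : ℝ → ℝ)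
    (hmul : ∀ t s : ℝ, t ∈ Icc (-T) T → s ∈ Icc (-T) T → t + s ∈ Icc (-T) T →
      w (t + s) = w t * w s)
    (hone : ∃ C₀ > (0:ℝ), ∀ t ∈ Icc (-T) T, |w t - 1| ≤ C₀ * |t|)
    (r : ℕ)
    (L : Polynomial ℝ) (hLdeg : L.natDegree = r) (hL1 : L.eval 1 = 1)
    (hLorth : ∀ q : Polynomial ℝ, q.degree < (r : WithBot ℕ) →
      ∫ t in (0:ℝ)..1, L.eval t * q.eval t = 0)
    (P : ℝ → Polynomial ℝ)
    (hPdeg : ∀ h : ℝ, 0 < h → h ≤ T → (P h).natDegree = r)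
    (hPnorm : ∀ h : ℝ, 0 < h → h ≤ T → (P h).eval h = 1)
    (hPorth : ∀ h : ℝ, 0 < h → h ≤ T → ∀ q : Polynomial ℝ, q.degree < (r : WithBot ℕ) →
      ∫ t in (0:ℝ)..h, (P h).eval t * q.eval t * w t = 0) :
    ∃ C > (0:ℝ), ∃ h₀ > (0:ℝ), ∀ h : ℝ, 0 < h → h ≤ h₀ → h ≤ T →
      ∀ t ∈ Icc (0:ℝ) h, |(P h).eval t - L.eval (t / h)| ≤ C * h := by
  obtain ⟨C₀, hC₀, hw1⟩ := hone
  have hw := continuousOn_Icc_of_map_add_eq_mul hC₀.le hmul hw1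
  obtain ⟨B, hB⟩ :=
    (isUnit_momentMatrix_one hLdeg (by simp [hL1]) hLorth).exists_left_inv
  have hAL : momentMatrix r 1 *ᵥ coeffVec r L = Pi.single (Fin.last r) 1 :=
    momentMatrix_mulVec_coeffVec hLdeg.le intervalIntegrable_const
      (fun j hj => by simpa using hLorth (X ^ j) (by simpa using hj)) hL1
  set K := ‖B‖ * ((r + 1) * C₀)
  have hK : 0 ≤ K := by positivity
  refine ⟨2 * (r + 1) * K * ‖coeffVec r L‖ + 1, by positivity, 1 / (2 * K + 1), by positivity,
    fun h hh hh₀ hhT t ht => ?_⟩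
  have hω := intervalIntegrable_comp_mul_of_continuousOn hw hh.le hhT
  have hAP : momentMatrix r (fun s => w (h * s)) *ᵥ coeffVec r ((P h).comp (C h * X)) =
      Pi.single (Fin.last r) 1 :=
    momentMatrix_mulVec_coeffVec (natDegree_comp_C_mul_X_le (hPdeg h hh hhT).le h) hω
      (fun j hj => integral_comp_C_mul_X_mul_pow_eq_zero hh.ne' (hPorth h hh hhT) hj)
      (by simpa using hPnorm h hh hhT)
  have hsmall : ‖B‖ * ((r + 1) * (C₀ * h)) ≤ 1 / 2 := by
    rw [le_div_iff₀ (by positivity)] at hh₀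
    calc ‖B‖ * ((r + 1) * (C₀ * h)) = K * h := by ring
      _ ≤ 1 / 2 := by nlinarith
  have hclose := norm_sub_le_of_mulVec_eq hB hAL hAP
    (norm_momentMatrix_sub_le hω fun s => abs_comp_mul_sub_one_le hC₀.le hw1 hh.le hhT) hsmall
  calc |(P h).eval t - L.eval (t / h)|
      ≤ (r + 1) * ‖coeffVec r ((P h).comp (C h * X)) - coeffVec r L‖ :=
        abs_eval_sub_eval_div_le (hPdeg h hh hhT).le hLdeg.le hh ht
    _ ≤ (r + 1) * (2 * ‖B‖ * ((r + 1) * (C₀ * h)) * ‖coeffVec r L‖) := by gcongr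
    _ ≤ (2 * (r + 1) * K * ‖coeffVec r L‖ + 1) * h := by
        nlinarith [norm_nonneg (coeffVec r L)]

/-- With `w` a multiplicative weight with `w(t) = 1 + O(t)`, the orthogonal polynomials
`P_r^h` on `[0,h]` for the weighted inner product, normalized by `P_r^h(h) = 1`, satisfy
`P_r^h(t) = L_r(t/h) + O(h)` uniformly on `[0,h]` as `h → 0`, where `L_r` is the Legendre
polynomial on `[0,1]` with `L_r(1) = 1`. -/
theorem stmt_17 (T : ℝ) (hT : 0 < T) (w : ℝ → ℝ)
    (hwpos : ∀ t ∈ Icc (-T) T, 0 < w t)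
    (hmul : ∀ t s : ℝ, t ∈ Icc (-T) T → s ∈ Icc (-T) T → t + s ∈ Icc (-T) T →
      w (t + s) = w t * w s)
    (hone : ∃ C₀ > (0:ℝ), ∀ t ∈ Icc (-T) T, |w t - 1| ≤ C₀ * |t|)
    (r : ℕ)
    (L : Polynomial ℝ) (hLdeg : L.natDegree = r) (hL1 : L.eval 1 = 1)
    (hLorth : ∀ q : Polynomial ℝ, q.degree < (r : WithBot ℕ) →
      ∫ t in (0:ℝ)..1, L.eval t * q.eval t = 0)
    (P : ℝ → Polynomial ℝ)
    (hPdeg : ∀ h : ℝ, 0 < h → h ≤ T → (P h).natDegree = r)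
    (hPnorm : ∀ h : ℝ, 0 < h → h ≤ T → (P h).eval h = 1)
    (hPorth : ∀ h : ℝ, 0 < h → h ≤ T → ∀ q : Polynomial ℝ, q.degree < (r : WithBot ℕ) →
      ∫ t in (0:ℝ)..h, (P h).eval t * q.eval t * w t = 0) :
    ∃ C > (0:ℝ), ∃ h₀ > (0:ℝ), ∀ h : ℝ, 0 < h → h ≤ h₀ → h ≤ T →
      ∀ t ∈ Icc (0:ℝ) h, |(P h).eval t - L.eval (t / h)| ≤ C * h :=
  stmt_17_general T w hmul hone r L hLdeg hL1 hLorth P hPdeg hPnorm hPorth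
end

section
/- Let w satisfy w(t+s) = w(t)w(s), w(t) = 1 + O(t), and 0 ≤ w_0 ≤ w(t) ≤ w_1 on [0,T]. On a uniform mesh t_j = jh (h = T/N), let P_r^i be the orthogonal polynomials on [t_{i-1}, t_i] for the weight w, normalized with P_r^i(t_i)=1. Then as h → 0: (a) P_r^i(t_{i-1}) = (−1)^r + O(h); (b) ∫_{t_{i-1}}^{t_i} [P_r^i]² w dt = O(h); (c) ∫_{t_{i-1}}^{t_i} P_r^i(t)(t−t_{i-1})^k w(t) dt = O(h^{k+1}), with implicit constants independent of i. -/
/-!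
Rescaling `[t_{i-1}, t_i]` to `[0, 1]` and using `w(t_{i-1} + h s) = w(t_{i-1}) w(h s)`
turns `P_r^i` into a polynomial `Q` of degree `r` with `Q(1) = 1` that is orthogonal to lower
degrees for the weight `W(s) = w(h s) = 1 + O(h)`. For `W = 1` the solution is the shifted
Legendre polynomial `L`, and `L(0) = (-1)^r` because `s ↦ L(1 - s)` solves the same orthogonality
problem up to the factor `(-1)^r`. The conditions determining `L` form an injective linear system
on polynomials of degree `≤ r`, so by equivalence of norms in finite dimension `Q - L = O(h)`
uniformly on `[0, 1]`. This gives (a) and a uniform bound on `P_r^i`, from which (b) and (c)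
follow since `t_i - t_{i-1} = h`.
-/

open Real Set Polynomial MeasureTheory

lemma abs_intervalIntegral_le_of_abs_le {f : ℝ → ℝ} {a b B : ℝ} (hab : a ≤ b)
    (hf : ∀ t ∈ Icc a b, |f t| ≤ B) : |∫ t in a..b, f t| ≤ B * (b - a) := by
  rw [← Real.norm_eq_abs, ← abs_of_nonneg (sub_nonneg.mpr hab)]
  refine intervalIntegral.norm_integral_le_of_norm_le_const fun t ht => ?_
  rw [uIoc_of_le hab] at ht
  exact hf t (Ioc_subset_Icc_self ht)

lemma integral_mul_sq_pos {c q : ℝ[X]} (hc₀ : ∀ s ∈ Icc (0:ℝ) 1, 0 ≤ c.eval s)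
    (hc : ∀ s ∈ Ioo (0:ℝ) 1, 0 < c.eval s) (hq : q ≠ 0) :
    0 < ∫ s in (0:ℝ)..1, c.eval s * q.eval s ^ 2 := by
  have hnonneg : 0 ≤ᵐ[volume.restrict (uIoc (0:ℝ) 1)] fun s => c.eval s * q.eval s ^ 2 := by
    rw [uIoc_of_le zero_le_one]
    filter_upwards [ae_restrict_mem measurableSet_Ioc] with s hs
    exact mul_nonneg (hc₀ s (Ioc_subset_Icc_self hs)) (sq_nonneg _)
  rw [intervalIntegral.integral_pos_iff_support_of_nonneg_ae' hnonneg
    ((by fun_prop : Continuous fun s => c.eval s * q.eval s ^ 2).intervalIntegrable _ _)]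
  refine ⟨zero_lt_one, ?_⟩
  have hsub : Ioo (0:ℝ) 1 \ {x | q.IsRoot x} ⊆
      Function.support (fun s => c.eval s * q.eval s ^ 2) ∩ Ioc 0 1 := fun x ⟨hx, hxq⟩ =>
    ⟨(mul_pos (hc x hx) (pow_pos (abs_pos.mpr hxq) 2 |>.trans_eq (sq_abs _))).ne',
      Ioo_subset_Ioc_self hx⟩
  calc (0 : ENNReal) < volume (Ioo (0:ℝ) 1 \ {x | q.IsRoot x}) := by
        rw [measure_sdiff_null ((finite_setOfPred_isRoot hq).measure_zero _)]; simp
    _ ≤ _ := measure_mono hsub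

lemma integral_mul_eq_zero_of_natDegree_lt {p q : ℝ[X]} {r : ℕ}
    (hp : ∀ m < r, ∫ s in (0:ℝ)..1, p.eval s * s ^ m = 0) (hq : q.natDegree < r) :
    ∫ s in (0:ℝ)..1, p.eval s * q.eval s = 0 := by
  simp_rw [eval_eq_sum_range' hq, Finset.mul_sum]
  rw [intervalIntegral.integral_finsetSum fun m _ =>
    (by fun_prop : Continuous _).intervalIntegrable _ _]
  refine Finset.sum_eq_zero fun m hm => ?_
  simp_rw [mul_left_comm _ (q.coeff m)]
  rw [intervalIntegral.integral_const_mul, hp m (Finset.mem_range.mp hm), mul_zero]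

/-- The shifted Legendre polynomial of degree `r` on `[0, 1]`, normalized by `L(1) = 1`, is the
polynomial of degree `≤ r` that this map sends to `Pi.single (Fin.last r) 1`. -/
noncomputable def legendreConditions (r : ℕ) : ℝ[X] →ₗ[ℝ] Fin (r + 1) → ℝ where
  toFun p m := if (m : ℕ) < r then ∫ s in (0:ℝ)..1, p.eval s * s ^ (m : ℕ) else p.eval 1
  map_add' p q := by
    ext m
    simp only [Pi.add_apply]
    split_ifs
    · simp only [eval_add, add_mul]
      exact intervalIntegral.integral_add ((by fun_prop : Continuous _).intervalIntegrable _ _)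
        ((by fun_prop : Continuous _).intervalIntegrable _ _)
    · simp
  map_smul' a p := by
    ext m
    simp only [Pi.smul_apply, RingHom.id_apply, smul_eq_mul]
    split_ifs
    · simp [mul_assoc]
    · simp

lemma legendreConditions_apply_of_lt {r m : ℕ} (p : ℝ[X]) (hm : m < r) :
    legendreConditions r p ⟨m, by omega⟩ = ∫ s in (0:ℝ)..1, p.eval s * s ^ m :=
  if_pos hm

lemma legendreConditions_apply_last (r : ℕ) (p : ℝ[X]) :
    legendreConditions r p (Fin.last r) = p.eval 1 :=
  if_neg (lt_irrefl r)

lemma eq_zero_of_degree_lt_of_moments_eq_zero {d : ℝ[X]} {r : ℕ} (hd : d.degree < r)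
    (h : ∀ m < r, ∫ s in (0:ℝ)..1, d.eval s * s ^ m = 0) : d = 0 := by
  by_contra hd₀
  have hpos := integral_mul_sq_pos (c := 1) (by simp) (by simp) hd₀
  simp_rw [eval_one, one_mul, sq, integral_mul_eq_zero_of_natDegree_lt h
    ((natDegree_lt_iff_degree_lt hd₀).mpr hd)] at hpos
  exact hpos.false

lemma eq_zero_of_legendreConditions_eq_zero {r : ℕ} {p : ℝ[X]} (hp : p.natDegree ≤ r)
    (h : legendreConditions r p = 0) : p = 0 := by
  have hmoments : ∀ m < r, ∫ s in (0:ℝ)..1, p.eval s * s ^ m = 0 := fun m hm => by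
    rw [← legendreConditions_apply_of_lt p hm, h, Pi.zero_apply]
  have hroot : p.IsRoot 1 := by
    rw [IsRoot, ← legendreConditions_apply_last, h, Pi.zero_apply]
  obtain ⟨q, rfl⟩ := dvd_iff_isRoot.mpr hroot
  by_contra hp₀
  have hq : q ≠ 0 := right_ne_zero_of_mul hp₀
  have hqdeg : q.natDegree < r := by
    rw [natDegree_mul (X_sub_C_ne_zero 1) hq, natDegree_X_sub_C] at hp
    omega
  have hpos := integral_mul_sq_pos (c := 1 - X) (fun s hs => by simpa using hs.2)
    (fun s hs => by simpa using hs.2) hq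
  have hneg : ∫ s in (0:ℝ)..1, (1 - X : ℝ[X]).eval s * q.eval s ^ 2
      = -∫ s in (0:ℝ)..1, ((X - C 1) * q).eval s * q.eval s := by
    rw [← intervalIntegral.integral_neg]
    congr 1; ext s
    simp only [eval_sub, eval_one, eval_X, eval_mul, eval_C]
    ring
  rw [hneg, integral_mul_eq_zero_of_natDegree_lt hmoments hqdeg, neg_zero] at hpos
  exact hpos.false

lemma mem_degreeLT_succ_iff_natDegree_le {R : Type*} [Semiring R] {r : ℕ} {p : R[X]} :
    p ∈ degreeLT R (r + 1) ↔ p.natDegree ≤ r := by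
  rw [degreeLT_succ_eq_degreeLE, mem_degreeLE, natDegree_le_iff_degree_le]

lemma injective_legendreConditions_domRestrict (r : ℕ) :
    Function.Injective ((legendreConditions r).domRestrict (degreeLT ℝ (r + 1))) := by
  rw [← LinearMap.ker_eq_bot, LinearMap.ker_eq_bot']
  rintro ⟨p, hp⟩ h
  exact Subtype.ext (eq_zero_of_legendreConditions_eq_zero
    (mem_degreeLT_succ_iff_natDegree_le.mp hp) h)

lemma exists_legendreConditions_eq_single (r : ℕ) :
    ∃ L : ℝ[X], L.natDegree ≤ r ∧ legendreConditions r L = Pi.single (Fin.last r) 1 := by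
  have hrank : Module.finrank ℝ (degreeLT ℝ (r + 1)) = Module.finrank ℝ (Fin (r + 1) → ℝ) :=
    (degreeLTEquiv ℝ (r + 1)).finrank_eq
  obtain ⟨⟨L, hL⟩, hLe⟩ := (LinearMap.injective_iff_surjective_of_finrank_eq_finrank hrank).mp
    (injective_legendreConditions_domRestrict r) (Pi.single (Fin.last r) 1)
  exact ⟨L, mem_degreeLT_succ_iff_natDegree_le.mp hL, hLe⟩

lemma exists_abs_eval_le_norm_legendreConditions (r : ℕ) :
    ∃ K > 0, ∀ p : ℝ[X], p.natDegree ≤ r →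
      ∀ s ∈ Icc (0:ℝ) 1, |p.eval s| ≤ K * ‖legendreConditions r p‖ := by
  set f := (legendreConditions r).domRestrict (degreeLT ℝ (r + 1)) ∘ₗ
    (degreeLTEquiv ℝ (r + 1)).symm.toLinearMap
  have hf : Function.Injective f :=
    (injective_legendreConditions_domRestrict r).comp (degreeLTEquiv ℝ (r + 1)).symm.injective
  obtain ⟨K, hK, hanti⟩ := f.exists_antilipschitzWith (LinearMap.ker_eq_bot.mpr hf)
  refine ⟨(r + 1) * K, by positivity, fun p hp s hs => ?_⟩
  have hp' := mem_degreeLT_succ_iff_natDegree_le.mpr hp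
  set v := degreeLTEquiv ℝ (r + 1) ⟨p, hp'⟩
  have hv : ‖v‖ ≤ K * ‖legendreConditions r p‖ := by
    simpa [f, v] using ZeroHomClass.bound_of_antilipschitz f hanti v
  have hterm : ∀ i : Fin (r + 1), |v i * s ^ (i : ℕ)| ≤ ‖v‖ := fun i => by
    rw [abs_mul, abs_pow, abs_of_nonneg hs.1]
    exact mul_le_of_le_one_right (abs_nonneg _) (pow_le_one₀ hs.1 hs.2) |>.trans
      (norm_le_pi_norm v i)
  calc |p.eval s| ≤ ∑ i : Fin (r + 1), |v i * s ^ (i : ℕ)| := by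
        rw [eval_eq_sum_degreeLTEquiv hp']; exact Finset.abs_sum_le_sum_abs _ _
    _ ≤ (r + 1) * ‖v‖ := by
        refine (Finset.sum_le_card_nsmul Finset.univ _ _ fun i _ => hterm i).trans_eq ?_
        simp
    _ ≤ (r + 1) * K * ‖legendreConditions r p‖ := by
        rw [mul_assoc]; gcongr

lemma natDegree_one_sub_X {R : Type*} [Ring R] [Nontrivial R] : (1 - X : R[X]).natDegree = 1 := by
  rw [← neg_sub, natDegree_neg, ← C_1, natDegree_X_sub_C]

lemma coeff_comp_one_sub_X {R : Type*} [CommRing R] [Nontrivial R] {p : R[X]} {r : ℕ}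
    (hp : p.natDegree ≤ r) : (p.comp (1 - X)).coeff r = (-1) ^ r * p.coeff r := by
  rcases hp.lt_or_eq with hp | rfl
  · have hcomp : (p.comp (1 - X)).natDegree < r :=
      natDegree_comp_le.trans_lt (by rwa [natDegree_one_sub_X, mul_one])
    rw [coeff_eq_zero_of_natDegree_lt hcomp, coeff_eq_zero_of_natDegree_lt hp, mul_zero]
  · have h := coeff_comp_degree_mul_degree (p := p) (q := 1 - X)
      (by rw [natDegree_one_sub_X]; exact one_ne_zero)
    rwa [natDegree_one_sub_X, mul_one, ← neg_sub, leadingCoeff_neg, ← C_1,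
      leadingCoeff_X_sub_C, mul_comm, C_1, neg_sub] at h

lemma moments_comp_one_sub_X_eq_zero {p : ℝ[X]} {r : ℕ}
    (hp : ∀ m < r, ∫ s in (0:ℝ)..1, p.eval s * s ^ m = 0) :
    ∀ m < r, ∫ s in (0:ℝ)..1, (p.comp (1 - X)).eval s * s ^ m = 0 := by
  intro m hm
  have hsub := intervalIntegral.integral_comp_sub_left
    (fun u => p.eval u * ((1 - X : ℝ[X]) ^ m).eval u) (a := 0) (b := 1) 1
  simp only [eval_pow, eval_sub, eval_one, eval_X, sub_sub_cancel, sub_zero, sub_self] at hsub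
  simp only [eval_comp, eval_sub, eval_one, eval_X]
  rw [hsub]
  have h := integral_mul_eq_zero_of_natDegree_lt hp (q := (1 - X) ^ m)
    (natDegree_pow_le.trans_lt (by rwa [natDegree_one_sub_X, mul_one]))
  simpa only [eval_pow, eval_sub, eval_one, eval_X] using h

lemma eval_zero_of_legendreConditions_eq_single {r : ℕ} {L : ℝ[X]} (hL : L.natDegree ≤ r)
    (h : legendreConditions r L = Pi.single (Fin.last r) 1) : L.eval 0 = (-1) ^ r := by
  have hmoments : ∀ m < r, ∫ s in (0:ℝ)..1, L.eval s * s ^ m = 0 := fun m hm => by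
    rw [← legendreConditions_apply_of_lt L hm, h, Pi.single_apply, if_neg]
    simp [Fin.ext_iff, hm.ne]
  have hL1 : L.eval 1 = 1 := by
    rw [← legendreConditions_apply_last, h, Pi.single_eq_same]
  set d := L.comp (1 - X) - C ((-1) ^ r) * L
  have hd : d.degree < r := by
    rw [degree_lt_iff_coeff_zero]
    intro m hm
    rcases hm.lt_or_eq with hm | rfl
    · refine coeff_eq_zero_of_natDegree_lt ((natDegree_sub_le _ _).trans_lt (max_lt ?_ ?_))
      · exact (natDegree_comp_le.trans (by rw [natDegree_one_sub_X, mul_one])).trans_lt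
          (hL.trans_lt hm)
      · exact (natDegree_C_mul_le _ _).trans_lt (hL.trans_lt hm)
    · rw [coeff_sub, coeff_C_mul, coeff_comp_one_sub_X hL, sub_self]
  have hd₀ : d = 0 := by
    refine eq_zero_of_degree_lt_of_moments_eq_zero hd fun m hm => ?_
    simp only [d, eval_sub, eval_mul, eval_C, sub_mul, mul_assoc]
    rw [intervalIntegral.integral_sub ((by fun_prop : Continuous _).intervalIntegrable _ _)
      ((by fun_prop : Continuous _).intervalIntegrable _ _), intervalIntegral.integral_const_mul,
      moments_comp_one_sub_X_eq_zero hmoments m hm, hmoments m hm, mul_zero, sub_zero]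
  have h0 := congrArg (eval 0) hd₀
  simp only [d, eval_sub, eval_comp, eval_mul, eval_C, eval_one, eval_X, sub_zero, hL1,
    eval_zero] at h0
  have hsq : ((-1 : ℝ) ^ r) ^ 2 = 1 := by rw [← pow_mul, mul_comm, pow_mul, neg_one_sq, one_pow]
  linear_combination (-(-1 : ℝ) ^ r) * h0 - L.eval 0 * hsq

lemma abs_moment_le_of_weighted_moment_eq_zero {Q : ℝ[X]} {W : ℝ → ℝ} {ε B : ℝ} {m : ℕ}
    (hW : IntervalIntegrable W volume 0 1) (hW₁ : ∀ s ∈ Icc (0:ℝ) 1, |W s - 1| ≤ ε)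
    (hQ : ∀ s ∈ Icc (0:ℝ) 1, |Q.eval s| ≤ B)
    (horth : ∫ s in (0:ℝ)..1, Q.eval s * s ^ m * W s = 0) :
    |∫ s in (0:ℝ)..1, Q.eval s * s ^ m| ≤ B * ε := by
  have hsplit : ∫ s in (0:ℝ)..1, Q.eval s * s ^ m
      = ∫ s in (0:ℝ)..1, Q.eval s * s ^ m * (1 - W s) := by
    simp_rw [mul_sub, mul_one]
    rw [intervalIntegral.integral_sub ((by fun_prop : Continuous _).intervalIntegrable _ _)
      (hW.continuousOn_mul (by fun_prop)), horth, sub_zero]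
  rw [hsplit]
  refine (abs_intervalIntegral_le_of_abs_le (B := B * ε) zero_le_one fun s hs => ?_).trans_eq
    (by ring)
  rw [abs_mul, abs_mul, abs_pow, abs_of_nonneg hs.1, abs_sub_comm]
  have hpow : s ^ m ≤ 1 := pow_le_one₀ hs.1 hs.2
  have hQs := hQ s hs
  have hB : 0 ≤ B := (abs_nonneg _).trans hQs
  have hWs := hW₁ s hs
  calc |Q.eval s| * s ^ m * |W s - 1| ≤ B * 1 * ε := by gcongr; exact pow_nonneg hs.1 m
    _ = B * ε := by ring

lemma norm_legendreConditions_sub_le {r : ℕ} {Q L : ℝ[X]} {W : ℝ → ℝ} {ε B : ℝ}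
    (hε : 0 ≤ ε) (hB : 0 ≤ B)
    (hW : IntervalIntegrable W volume 0 1) (hW₁ : ∀ s ∈ Icc (0:ℝ) 1, |W s - 1| ≤ ε)
    (hQ : ∀ s ∈ Icc (0:ℝ) 1, |Q.eval s| ≤ B) (hQ₁ : Q.eval 1 = 1)
    (horth : ∀ m < r, ∫ s in (0:ℝ)..1, Q.eval s * s ^ m * W s = 0)
    (hL : legendreConditions r L = Pi.single (Fin.last r) 1) :
    ‖legendreConditions r (Q - L)‖ ≤ B * ε := by
  refine (pi_norm_le_iff_of_nonneg (by positivity)).mpr fun m => ?_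
  rw [map_sub, hL, Pi.sub_apply, Real.norm_eq_abs]
  rcases Fin.eq_castSucc_or_eq_last m with ⟨m, rfl⟩ | rfl
  · rw [Pi.single_eq_of_ne (Fin.castSucc_ne_last m), sub_zero]
    exact (legendreConditions_apply_of_lt Q m.isLt).symm ▸
      abs_moment_le_of_weighted_moment_eq_zero hW hW₁ hQ (horth m m.isLt)
  · rw [legendreConditions_apply_last, hQ₁, Pi.single_eq_same, sub_self, abs_zero]
    positivity

theorem exists_perturbed_legendre_bound (r : ℕ) :
    ∃ K > 0, ∀ (ε : ℝ) (W : ℝ → ℝ), K * ε ≤ 1 → IntervalIntegrable W volume 0 1 →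
      (∀ s ∈ Icc (0:ℝ) 1, |W s - 1| ≤ ε) →
      ∀ Q : ℝ[X], Q.natDegree ≤ r → Q.eval 1 = 1 →
        (∀ m < r, ∫ s in (0:ℝ)..1, Q.eval s * s ^ m * W s = 0) →
        |Q.eval 0 - (-1) ^ r| ≤ K * ε ∧ ∀ s ∈ Icc (0:ℝ) 1, |Q.eval s| ≤ K := by
  obtain ⟨K₀, hK₀, hbound⟩ := exists_abs_eval_le_norm_legendreConditions r
  obtain ⟨L, hLdeg, hL⟩ := exists_legendreConditions_eq_single r
  refine ⟨2 * K₀ * (K₀ + 1), by positivity, fun ε W hKε hW hW₁ Q hQdeg hQ₁ horth => ?_⟩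
  have hε : 0 ≤ ε := (abs_nonneg _).trans (hW₁ 0 ⟨le_rfl, zero_le_one⟩)
  have hK₀ε : K₀ * ε ≤ 1 / 2 := by nlinarith
  have hDdeg : (Q - L).natDegree ≤ r := (natDegree_sub_le _ _).trans (max_le hQdeg hLdeg)
  set δ := K₀ * ‖legendreConditions r (Q - L)‖
  have hD : ∀ s ∈ Icc (0:ℝ) 1, |(Q - L).eval s| ≤ δ := hbound _ hDdeg
  have hLs : ∀ s ∈ Icc (0:ℝ) 1, |L.eval s| ≤ K₀ := fun s hs => by
    simpa [hL, Pi.norm_single] using hbound L hLdeg s hs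
  have hQs : ∀ s ∈ Icc (0:ℝ) 1, |Q.eval s| ≤ K₀ + δ := fun s hs => by
    have := hD s hs
    rw [eval_sub] at this
    linarith [abs_sub_abs_le_abs_sub (Q.eval s) (L.eval s), hLs s hs]
  have hδ : δ ≤ 2 * K₀ ^ 2 * ε := by
    have h := norm_legendreConditions_sub_le hε (by positivity) hW hW₁ hQs hQ₁ horth hL
    have h' : δ ≤ K₀ * ((K₀ + δ) * ε) := mul_le_mul_of_nonneg_left h hK₀.le
    have hδ₀ : 0 ≤ δ := by positivity
    nlinarith [mul_le_mul_of_nonneg_left hK₀ε hδ₀]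
  refine ⟨?_, fun s hs => ?_⟩
  · have h0 := hD 0 ⟨le_rfl, zero_le_one⟩
    rw [eval_sub, eval_zero_of_legendreConditions_eq_single hLdeg hL] at h0
    nlinarith
  · nlinarith [hQs s hs]

lemma continuousOn_of_mul_of_abs_sub_one_le {T w₁ C₀ : ℝ} {w : ℝ → ℝ}
    (hw₁ : ∀ t ∈ Icc 0 T, |w t| ≤ w₁)
    (hmul : ∀ t s : ℝ, t ∈ Icc (-T) T → s ∈ Icc (-T) T → t + s ∈ Icc (-T) T →
      w (t + s) = w t * w s)
    (hC₀ : ∀ t ∈ Icc (-T) T, |w t - 1| ≤ C₀ * |t|) : ContinuousOn w (Icc 0 T) := by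
  refine (LipschitzOnWith.of_dist_le_mul (K := (w₁ * C₀).toNNReal) fun y hy x hx => ?_).continuousOn
  have hyx : y - x ∈ Icc (-T) T := ⟨by linarith [hx.2, hy.1], by linarith [hx.1, hy.2]⟩
  have hfac : w y = w x * w (y - x) := by
    simpa using hmul x (y - x) ⟨by linarith [hx.1, hx.2], hx.2⟩ hyx
      ⟨by linarith [hy.1, hx.1, hx.2], by linarith [hy.2]⟩
  rw [Real.dist_eq, Real.dist_eq, hfac, ← mul_sub_one, abs_mul]
  calc |w x| * |w (y - x) - 1| ≤ w₁ * (C₀ * |y - x|) :=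
        mul_le_mul (hw₁ x hx) (hC₀ _ hyx) (abs_nonneg _) ((abs_nonneg _).trans (hw₁ x hx))
    _ ≤ (w₁ * C₀).toNNReal * |y - x| := by
        rw [← mul_assoc]; exact mul_le_mul_of_nonneg_right (le_coe_toNNReal _) (abs_nonneg _)

lemma integral_comp_affine_mul_pow_eq_zero {P : ℝ[X]} {w W : ℝ → ℝ} {c h κ : ℝ} {r m : ℕ}
    (hh : 0 < h) (hκ : κ ≠ 0) (hW : ∀ s ∈ Icc (0:ℝ) 1, w (h * s + c) = κ * W s)
    (horth : ∀ q : ℝ[X], q.degree < r → ∫ t in c..c + h, P.eval t * q.eval t * w t = 0)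
    (hm : m < r) :
    ∫ s in (0:ℝ)..1, (P.comp (C h * X + C c)).eval s * s ^ m * W s = 0 := by
  set q : ℝ[X] := (C h⁻¹ * (X - C c)) ^ m
  have hq : q.degree < r := by
    have hlin : (C h⁻¹ * (X - C c)).natDegree ≤ 1 :=
      (natDegree_C_mul_le _ _).trans (natDegree_X_sub_C c).le
    refine degree_le_natDegree.trans_lt (WithBot.coe_lt_coe.mpr ?_)
    exact natDegree_pow_le.trans_lt (by nlinarith)
  have hchange := intervalIntegral.integral_comp_mul_add (a := 0) (b := 1)
    (fun t => P.eval t * q.eval t * w t) hh.ne' c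
  rw [mul_zero, zero_add, mul_one, add_comm h, horth q hq, smul_zero] at hchange
  have hcongr : EqOn (fun s => P.eval (h * s + c) * q.eval (h * s + c) * w (h * s + c))
      (fun s => κ * ((P.comp (C h * X + C c)).eval s * s ^ m * W s)) (uIcc 0 1) := by
    intro s hs
    rw [uIcc_of_le zero_le_one] at hs
    simp only [q, hW s hs, eval_comp, eval_pow, eval_mul, eval_add, eval_sub, eval_C, eval_X,
      add_sub_cancel_right, inv_mul_cancel_left₀ hh.ne']
    ring
  rw [intervalIntegral.integral_congr hcongr, intervalIntegral.integral_const_mul] at hchange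
  exact (mul_eq_zero.mp hchange).resolve_left hκ

lemma abs_eval_le_of_abs_eval_comp_affine_le {P : ℝ[X]} {c h K : ℝ} (hh : 0 < h)
    (hQ : ∀ s ∈ Icc (0:ℝ) 1, |(P.comp (C h * X + C c)).eval s| ≤ K) :
    ∀ t ∈ Icc c (c + h), |P.eval t| ≤ K := by
  intro t ht
  have hs : (t - c) / h ∈ Icc (0:ℝ) 1 :=
    ⟨div_nonneg (by linarith [ht.1]) hh.le, (div_le_one hh).mpr (by linarith [ht.2])⟩
  simpa [mul_div_cancel₀ _ hh.ne'] using hQ _ hs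

theorem exists_orthogonalPoly_bound_of_mul_weight {T w₁ : ℝ} {w : ℝ → ℝ}
    (hw₁ : ∀ t ∈ Icc (0:ℝ) T, w t ≤ w₁) (hwpos : ∀ t ∈ Icc (-T) T, 0 < w t)
    (hmul : ∀ t s : ℝ, t ∈ Icc (-T) T → s ∈ Icc (-T) T → t + s ∈ Icc (-T) T →
      w (t + s) = w t * w s)
    (hone : ∃ C₀ > (0:ℝ), ∀ t ∈ Icc (-T) T, |w t - 1| ≤ C₀ * |t|) (r : ℕ) :
    ∃ K > 0, ∀ c h : ℝ, 0 ≤ c → 0 < h → c + h ≤ T → K * h ≤ 1 →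
      ∀ P : ℝ[X], P.natDegree ≤ r → P.eval (c + h) = 1 →
        (∀ q : ℝ[X], q.degree < r → ∫ t in c..c + h, P.eval t * q.eval t * w t = 0) →
        |P.eval c - (-1) ^ r| ≤ K * h ∧ ∀ t ∈ Icc c (c + h), |P.eval t| ≤ K := by
  obtain ⟨C₀, hC₀, hw⟩ := hone
  obtain ⟨K, hK, hpert⟩ := exists_perturbed_legendre_bound r
  have hcont : ContinuousOn w (Icc 0 T) := continuousOn_of_mul_of_abs_sub_one_le
    (fun t ht => (abs_of_pos (hwpos t ⟨by linarith [ht.1, ht.2], ht.2⟩)).trans_le (hw₁ t ht))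
    hmul hw
  refine ⟨K * (C₀ + 1), by positivity, fun c h hc hh hcT hKh P hPdeg hP₁ horth => ?_⟩
  have hmem : ∀ s ∈ Icc (0:ℝ) 1, h * s ∈ Icc 0 T ∧ h * s ≤ h := fun s hs =>
    ⟨⟨by nlinarith [hs.1], by nlinarith [hs.2]⟩, by nlinarith [hs.2]⟩
  set Q := P.comp (C h * X + C c)
  have hQ : ∀ s, Q.eval s = P.eval (h * s + c) := fun s => by simp [Q]
  have hQdeg : Q.natDegree ≤ r :=
    natDegree_comp_le.trans (by nlinarith [natDegree_linear_le (a := h) (b := c)])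
  have hW : IntervalIntegrable (fun s => w (h * s)) volume 0 1 := by
    refine ContinuousOn.intervalIntegrable ?_
    rw [uIcc_of_le zero_le_one]
    exact hcont.comp (by fun_prop) fun s hs => (hmem s hs).1
  have hW₁ : ∀ s ∈ Icc (0:ℝ) 1, |w (h * s) - 1| ≤ C₀ * h := fun s hs => by
    obtain ⟨⟨h0, hT⟩, hle⟩ := hmem s hs
    refine (hw _ ⟨by linarith, hT⟩).trans ?_
    rw [abs_of_nonneg h0]
    exact mul_le_mul_of_nonneg_left hle hC₀.le
  have hfac : ∀ s ∈ Icc (0:ℝ) 1, w (h * s + c) = w c * w (h * s) := fun s hs => by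
    obtain ⟨⟨h0, hT⟩, hle⟩ := hmem s hs
    rw [add_comm]
    exact hmul c (h * s) ⟨by linarith, by linarith⟩ ⟨by linarith, hT⟩ ⟨by linarith, by linarith⟩
  have hQorth := fun m (hm : m < r) => integral_comp_affine_mul_pow_eq_zero hh
    (hwpos c ⟨by linarith, by linarith⟩).ne' hfac horth hm
  obtain ⟨h0, hbound⟩ := hpert (C₀ * h) _ (by nlinarith) hW hW₁ Q hQdeg
    (by rw [hQ, mul_one, add_comm, hP₁]) hQorth
  refine ⟨?_, fun t ht => ?_⟩
  · rw [hQ, mul_zero, zero_add] at h0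
    nlinarith
  · exact abs_eval_le_of_abs_eval_comp_affine_le hh
      (fun s hs => (hbound s hs).trans (le_mul_of_one_le_right hK.le (by linarith))) t ht

lemma abs_integral_sq_mul_le {f w : ℝ → ℝ} {c h K w₁ : ℝ} (hh : 0 ≤ h)
    (hf : ∀ t ∈ Icc c (c + h), |f t| ≤ K) (hw₀ : ∀ t ∈ Icc c (c + h), 0 ≤ w t)
    (hw₁ : ∀ t ∈ Icc c (c + h), w t ≤ w₁) :
    |∫ t in c..c + h, f t ^ 2 * w t| ≤ K ^ 2 * w₁ * h := by
  refine (abs_intervalIntegral_le_of_abs_le (by linarith) fun t ht => ?_).trans_eq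
    (by rw [add_sub_cancel_left])
  rw [abs_mul, abs_pow, abs_of_nonneg (hw₀ t ht)]
  exact mul_le_mul (pow_le_pow_left₀ (abs_nonneg _) (hf t ht) 2) (hw₁ t ht) (hw₀ t ht)
    (by positivity)

lemma abs_integral_mul_pow_sub_mul_le {f w : ℝ → ℝ} {c h K w₁ : ℝ} (k : ℕ) (hh : 0 ≤ h)
    (hf : ∀ t ∈ Icc c (c + h), |f t| ≤ K) (hw₀ : ∀ t ∈ Icc c (c + h), 0 ≤ w t)
    (hw₁ : ∀ t ∈ Icc c (c + h), w t ≤ w₁) :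
    |∫ t in c..c + h, f t * (t - c) ^ k * w t| ≤ K * w₁ * h ^ (k + 1) := by
  refine (abs_intervalIntegral_le_of_abs_le (B := K * h ^ k * w₁) (by linarith)
    fun t ht => ?_).trans_eq (by rw [add_sub_cancel_left]; ring)
  have htc : 0 ≤ t - c := sub_nonneg.mpr ht.1
  rw [abs_mul, abs_mul, abs_pow, abs_of_nonneg (hw₀ t ht), abs_of_nonneg htc]
  have hpow : (t - c) ^ k ≤ h ^ k := pow_le_pow_left₀ htc (by linarith [ht.2]) k
  exact mul_le_mul (mul_le_mul (hf t ht) hpow (pow_nonneg htc k) ((abs_nonneg _).trans (hf t ht)))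
    (hw₁ t ht) (hw₀ t ht) (mul_nonneg ((abs_nonneg _).trans (hf t ht)) (by positivity))

lemma uniform_mesh_subinterval_bounds {T K : ℝ} {N i : ℕ} (hT : 0 < T)
    (hN : ⌈K * T⌉₊ + 1 ≤ N) (hi : 1 ≤ i) (hiN : i ≤ N) :
    0 < T / N ∧ 0 ≤ ((i : ℝ) - 1) * (T / N) ∧ ((i : ℝ) - 1) * (T / N) + T / N ≤ T ∧
      K * (T / N) ≤ 1 := by
  have hKT : K * T + 1 ≤ N := by
    have := Nat.le_ceil (K * T)
    have : ((⌈K * T⌉₊ + 1 : ℕ) : ℝ) ≤ N := Nat.cast_le.mpr hN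
    push_cast at this
    linarith
  have hN₀ : (0 : ℝ) < N := by exact_mod_cast (Nat.succ_pos _).trans_le hN
  have hi' : (1 : ℝ) ≤ i := by exact_mod_cast hi
  have hiN' : (i : ℝ) ≤ N := by exact_mod_cast hiN
  refine ⟨by positivity, by positivity, ?_, ?_⟩
  · rw [← sub_nonneg, show T - (((i : ℝ) - 1) * (T / N) + T / N) = (N - i) * T / N by
      field_simp; ring]
    exact div_nonneg (mul_nonneg (by linarith) hT.le) hN₀.le
  · rw [mul_div_assoc', div_le_one hN₀]
    linarith

theorem stmt_18_general (T w₀ w₁ : ℝ) (hT : 0 < T) (w : ℝ → ℝ)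
    (hbound : ∀ t ∈ Icc (0:ℝ) T, w₀ ≤ w t ∧ w t ≤ w₁)
    (hwpos : ∀ t ∈ Icc (-T) T, 0 < w t)
    (hmul : ∀ t s : ℝ, t ∈ Icc (-T) T → s ∈ Icc (-T) T → t + s ∈ Icc (-T) T →
      w (t + s) = w t * w s)
    (hone : ∃ C₀ > (0:ℝ), ∀ t ∈ Icc (-T) T, |w t - 1| ≤ C₀ * |t|)
    (r k : ℕ) :
    ∃ C > (0:ℝ), ∃ N₀ : ℕ, ∀ N : ℕ, N₀ ≤ N → ∀ i : ℕ, 1 ≤ i → i ≤ N →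
      ∀ P : Polynomial ℝ, P.natDegree = r →
        P.eval ((i : ℝ) * (T / N)) = 1 →
        (∀ q : Polynomial ℝ, q.degree < (r : WithBot ℕ) →
          ∫ t in (((i:ℝ) - 1) * (T / N))..((i:ℝ) * (T / N)),
            P.eval t * q.eval t * w t = 0) →
        |P.eval (((i:ℝ) - 1) * (T / N)) - (-1 : ℝ)^r| ≤ C * (T / N) ∧
        |∫ t in (((i:ℝ) - 1) * (T / N))..((i:ℝ) * (T / N)), (P.eval t)^2 * w t|
          ≤ C * (T / N) ∧
        |∫ t in (((i:ℝ) - 1) * (T / N))..((i:ℝ) * (T / N)),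
            P.eval t * (t - ((i:ℝ) - 1) * (T / N))^k * w t|
          ≤ C * (T / N)^(k + 1) := by
  obtain ⟨K, hK, hest⟩ := exists_orthogonalPoly_bound_of_mul_weight
    (fun t ht => (hbound t ht).2) hwpos hmul hone r
  have hw₁ : 0 ≤ w₁ := (hwpos 0 ⟨by linarith, hT.le⟩).le.trans (hbound 0 ⟨le_rfl, hT.le⟩).2
  refine ⟨K * (1 + K * w₁ + w₁), by positivity, ⌈K * T⌉₊ + 1,
    fun N hN i hi hiN P hPdeg hP₁ horth => ?_⟩
  obtain ⟨hh, hc, hcT, hKh⟩ := uniform_mesh_subinterval_bounds hT hN hi hiN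
  rw [show (i : ℝ) * (T / N) = ((i : ℝ) - 1) * (T / N) + T / N by ring] at hP₁ horth ⊢
  obtain ⟨ha, hP⟩ := hest _ _ hc hh hcT hKh P hPdeg.le hP₁ horth
  have hsub : ∀ t ∈ Icc (((i : ℝ) - 1) * (T / N)) (((i : ℝ) - 1) * (T / N) + T / N),
      t ∈ Icc (-T) T ∧ t ∈ Icc 0 T := fun t ht =>
    ⟨⟨by linarith [ht.1], by linarith [ht.2]⟩, ⟨by linarith [ht.1], by linarith [ht.2]⟩⟩
  have hw₀ := fun t ht => (hwpos t (hsub t ht).1).le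
  have hw := fun t ht => (hbound t (hsub t ht).2).2
  have hb := abs_integral_sq_mul_le hh.le hP hw₀ hw
  have hmoment := abs_integral_mul_pow_sub_mul_le k hh.le hP hw₀ hw
  have hKw := mul_nonneg hK.le hw₁
  refine ⟨ha.trans ?_, hb.trans ?_, hmoment.trans ?_⟩ <;>
    refine mul_le_mul_of_nonneg_right ?_ (by positivity) <;> nlinarith

/-- On a uniform mesh `t_j = j h`, `h = T/N`, the orthogonal polynomials `P_r^i` on
`[t_{i-1}, t_i]` for a multiplicative weight `w` with `w(t) = 1 + O(t)` and
`0 ≤ w₀ ≤ w ≤ w₁` on `[0,T]`, normalized by `P_r^i(t_i) = 1`, satisfy as `h → 0`: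
(a) `P_r^i(t_{i-1}) = (−1)^r + O(h)`; (b) `∫ (P_r^i)² w = O(h)`;
(c) `∫ P_r^i (t − t_{i-1})^k w = O(h^{k+1})`, uniformly in `i`. -/
theorem stmt_18 (T w₀ w₁ : ℝ) (hT : 0 < T) (w : ℝ → ℝ)
    (hw₀ : 0 ≤ w₀)
    (hbound : ∀ t ∈ Icc (0:ℝ) T, w₀ ≤ w t ∧ w t ≤ w₁)
    (hwpos : ∀ t ∈ Icc (-T) T, 0 < w t)
    (hmul : ∀ t s : ℝ, t ∈ Icc (-T) T → s ∈ Icc (-T) T → t + s ∈ Icc (-T) T →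
      w (t + s) = w t * w s)
    (hone : ∃ C₀ > (0:ℝ), ∀ t ∈ Icc (-T) T, |w t - 1| ≤ C₀ * |t|)
    (r k : ℕ) :
    ∃ C > (0:ℝ), ∃ N₀ : ℕ, ∀ N : ℕ, N₀ ≤ N → ∀ i : ℕ, 1 ≤ i → i ≤ N →
      ∀ P : Polynomial ℝ, P.natDegree = r →
        P.eval ((i : ℝ) * (T / N)) = 1 →
        (∀ q : Polynomial ℝ, q.degree < (r : WithBot ℕ) →
          ∫ t in (((i:ℝ) - 1) * (T / N))..((i:ℝ) * (T / N)),
            P.eval t * q.eval t * w t = 0) →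
        |P.eval (((i:ℝ) - 1) * (T / N)) - (-1 : ℝ)^r| ≤ C * (T / N) ∧
        |∫ t in (((i:ℝ) - 1) * (T / N))..((i:ℝ) * (T / N)), (P.eval t)^2 * w t|
          ≤ C * (T / N) ∧
        |∫ t in (((i:ℝ) - 1) * (T / N))..((i:ℝ) * (T / N)),
            P.eval t * (t - ((i:ℝ) - 1) * (T / N))^k * w t|
          ≤ C * (T / N)^(k + 1) :=
  stmt_18_general T w₀ w₁ hT w hbound hwpos hmul hone r k
end
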